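/- arXiv:1010.0130 — 14 statements merged into one kernel-verified Lean document; each statement's English description precedes it below -/
import Mathlib

section
/- Let p q : ℕ and let A : Matrix (Fin p) (Fin q) EReal. Then θ_A maps the row space R(A) bijectively onto the column space C(A) with inverse θ'_A (i.e. θ'_A (θ_A x) = x for all x ∈ R(A) and θ_A (θ'_A y) = y for all y ∈ C(A)), and θ_A is order-reversing on R(A): for all x, y ∈ R(A), x ≤ y pointwise if and only if θ_A y ≤ θ_A x pointwise. -/
/-- The row space of a matrix over the completed tropical semiring. -/
def rowSpace {p q : ℕ} (A : Matrix (Fin p) (Fin q) EReal) : Set (Fin q → EReal) :=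
  {x | ∃ lam : Fin p → EReal, ∀ j, x j = ⨆ i, lam i + A i j}

/-- The column space of a matrix over the completed tropical semiring. -/
def colSpace {p q : ℕ} (A : Matrix (Fin p) (Fin q) EReal) : Set (Fin p → EReal) :=
  {y | ∃ mu : Fin q → EReal, ∀ i, y i = ⨆ j, mu j + A i j}

/-- The duality map `θ_A`. -/
noncomputable def theta {p q : ℕ} (A : Matrix (Fin p) (Fin q) EReal)
    (x : Fin q → EReal) : Fin p → EReal :=
  fun i => ⨆ j, A i j + (- x j)

/-- The dual duality map `θ'_A`. -/
noncomputable def theta' {p q : ℕ} (A : Matrix (Fin p) (Fin q) EReal)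
    (y : Fin p → EReal) : Fin q → EReal :=
  fun j => ⨆ i, (- y i) + A i j

lemma key (a b : EReal) : -(a + b) + a ≤ -b := by
  induction a using EReal.rec <;> induction b using EReal.rec <;>
    simp_all [EReal.neg_add, ← EReal.coe_add, ← EReal.coe_neg]

lemma key' (a b : EReal) : a + (-(b + a)) ≤ -b := by
  rw [add_comm a, add_comm b]; exact key a b

lemma theta'_theta {p q : ℕ} (A : Matrix (Fin p) (Fin q) EReal)
    (x : Fin q → EReal) (hx : x ∈ rowSpace A) : theta' A (theta A x) = x := by
  obtain ⟨lam, hlam⟩ := hx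
  funext j
  apply le_antisymm
  · apply iSup_le; intro i
    have h1 : A i j + (-x j) ≤ theta A x i := le_iSup (fun j' => A i j' + (-x j')) j
    have h2 : -(theta A x i) ≤ -(A i j + (-x j)) := EReal.neg_le_neg_iff.2 h1
    calc -(theta A x i) + A i j ≤ -(A i j + (-x j)) + A i j := add_le_add_left h2 _
      _ ≤ -(-x j) := key _ _
      _ = x j := neg_neg _
  · rw [hlam j]
    apply iSup_le; intro i
    have hth : theta A x i ≤ -(lam i) := by
      apply iSup_le; intro j'
      have h1 : lam i + A i j' ≤ x j' := hlam j' ▸ le_iSup (fun i' => lam i' + A i' j') i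
      have h2 : -(x j') ≤ -(lam i + A i j') := EReal.neg_le_neg_iff.2 h1
      calc A i j' + (-(x j')) ≤ A i j' + (-(lam i + A i j')) := add_le_add_right h2 _
        _ ≤ -(lam i) := key' _ _
    have h3 : lam i ≤ -(theta A x i) := by
      have := EReal.neg_le_neg_iff.2 hth
      rwa [neg_neg] at this
    calc lam i + A i j ≤ -(theta A x i) + A i j := add_le_add_left h3 _
      _ ≤ ⨆ i', -(theta A x i') + A i' j := le_iSup (fun i' => -(theta A x i') + A i' j) i

lemma theta_theta' {p q : ℕ} (A : Matrix (Fin p) (Fin q) EReal)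
    (y : Fin p → EReal) (hy : y ∈ colSpace A) : theta A (theta' A y) = y := by
  obtain ⟨mu, hmu⟩ := hy
  funext i
  apply le_antisymm
  · apply iSup_le; intro j
    have h1 : (-y i) + A i j ≤ theta' A y j := le_iSup (fun i' => (-y i') + A i' j) i
    have h2 : -(theta' A y j) ≤ -((-y i) + A i j) := EReal.neg_le_neg_iff.2 h1
    calc A i j + (-(theta' A y j)) ≤ A i j + (-((-y i) + A i j)) := add_le_add_right h2 _
      _ ≤ -(-y i) := key' _ _
      _ = y i := neg_neg _
  · rw [hmu i]
    apply iSup_le; intro j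
    have hth : theta' A y j ≤ -(mu j) := by
      apply iSup_le; intro i'
      have h1 : mu j + A i' j ≤ y i' := hmu i' ▸ le_iSup (fun j' => mu j' + A i' j') j
      have h2 : -(y i') ≤ -(mu j + A i' j) := EReal.neg_le_neg_iff.2 h1
      calc (-(y i')) + A i' j ≤ -(mu j + A i' j) + A i' j := add_le_add_left h2 _
        _ ≤ -(mu j) := by rw [add_comm (mu j)]; exact key _ _
    have h3 : mu j ≤ -(theta' A y j) := by
      have := EReal.neg_le_neg_iff.2 hth
      rwa [neg_neg] at this
    calc mu j + A i j = A i j + mu j := add_comm _ _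
      _ ≤ A i j + (-(theta' A y j)) := add_le_add_right h3 _
      _ ≤ ⨆ j', A i j' + (-(theta' A y j')) :=
          le_iSup (fun j' => A i j' + (-(theta' A y j'))) j

lemma theta_anti {p q : ℕ} (A : Matrix (Fin p) (Fin q) EReal)
    {x y : Fin q → EReal} (h : ∀ j, x j ≤ y j) : ∀ i, theta A y i ≤ theta A x i := by
  intro i
  apply iSup_le; intro j
  calc A i j + (-y j) ≤ A i j + (-x j) :=
        add_le_add_right (EReal.neg_le_neg_iff.2 (h j)) _
    _ ≤ ⨆ j', A i j' + (-x j') := le_iSup (fun j' => A i j' + (-x j')) j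

lemma theta'_anti {p q : ℕ} (A : Matrix (Fin p) (Fin q) EReal)
    {u v : Fin p → EReal} (h : ∀ i, u i ≤ v i) : ∀ j, theta' A v j ≤ theta' A u j := by
  intro j
  apply iSup_le; intro i
  calc (-v i) + A i j ≤ (-u i) + A i j :=
        add_le_add_left (EReal.neg_le_neg_iff.2 (h i)) _
    _ ≤ ⨆ i', (-u i') + A i' j := le_iSup (fun i' => (-u i') + A i' j) i

theorem stmt_1 (p q : ℕ) (A : Matrix (Fin p) (Fin q) EReal) :
    Set.MapsTo (theta A) (rowSpace A) (colSpace A) ∧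
    Set.MapsTo (theta' A) (colSpace A) (rowSpace A) ∧
    (∀ x ∈ rowSpace A, theta' A (theta A x) = x) ∧
    (∀ y ∈ colSpace A, theta A (theta' A y) = y) ∧
    (∀ x ∈ rowSpace A, ∀ y ∈ rowSpace A,
      ((∀ j, x j ≤ y j) ↔ ∀ i, theta A y i ≤ theta A x i)) := by
  refine ⟨?_, ?_, theta'_theta A, theta_theta' A, ?_⟩
  · intro x _
    exact ⟨fun j => -x j, fun i => iSup_congr fun j => add_comm _ _⟩
  · intro y _
    exact ⟨fun i => -y i, fun j => rfl⟩
  · intro x hx y hy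
    refine ⟨theta_anti A, fun h j => ?_⟩
    have := theta'_anti A h j
    rwa [theta'_theta A x hx, theta'_theta A y hy] at this
end

section
/- Let p q : ℕ and let A : Matrix (Fin p) (Fin q) EReal. Then the duality map θ_A is an isometry of R(A) into C(A) with respect to the Hilbert projective distance: for all x, y ∈ R(A), d_H (θ_A x) (θ_A y) = d_H x y. -/
lemma real_add_le_iff (c : ℝ) (a b : EReal) : (c : EReal) + a ≤ b ↔ a ≤ ((-c : ℝ) : EReal) + b := by
  constructor <;> intro h
  · have := add_le_add_right h ((-c : ℝ) : EReal)
    rwa [← add_assoc, ← EReal.coe_add, neg_add_cancel, EReal.coe_zero, zero_add] at this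
  · have := add_le_add_right h ((c : ℝ) : EReal)
    rwa [← add_assoc, ← EReal.coe_add, add_neg_cancel, EReal.coe_zero, zero_add] at this

lemma eadd_iSup {ι : Sort*} (c : EReal) (f : ι → EReal) :
    c + ⨆ i, f i = ⨆ i, c + f i := by
  induction c using EReal.rec with
  | bot =>
    have h2 : (⨆ i, (⊥:EReal) + f i) = ⊥ := by
      rw [iSup_eq_bot]; intro i; exact EReal.bot_add _
    rw [EReal.bot_add, h2]
  | top =>
    by_cases hb : ∀ i, f i = ⊥
    · have h1 : (⨆ i, f i) = (⊥ : EReal) := by rw [iSup_eq_bot]; exact hb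
      have h2 : (⨆ i, (⊤:EReal) + f i) = ⊥ := by
        rw [iSup_eq_bot]; intro i; rw [hb i, EReal.add_bot]
      rw [h1, h2, EReal.add_bot]
    · push_neg at hb; obtain ⟨i, hi⟩ := hb
      rw [EReal.top_add_of_ne_bot (fun h' => hi (iSup_eq_bot.mp h' i))]
      exact (le_antisymm le_top (le_iSup_of_le i (EReal.top_add_of_ne_bot hi).ge)).symm
  | coe c =>
    refine le_antisymm ?_ (iSup_le fun i => add_le_add_right (le_iSup f i) _)
    rw [real_add_le_iff]
    exact iSup_le fun i => (real_add_le_iff c (f i) _).mp (le_iSup (fun i => (c:EReal) + f i) i)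

-- a + -(a + -b) ≤ b
lemma aux1 (a b : EReal) : a + -(a + -b) ≤ b := by
  induction a using EReal.rec with
  | bot => rw [EReal.bot_add]; exact bot_le
  | top =>
    induction b using EReal.rec with
    | bot => simp
    | top => simp
    | coe b => simp [EReal.top_add_of_ne_bot, EReal.add_bot]
  | coe a =>
    induction b using EReal.rec with
    | bot => simp [EReal.add_bot, EReal.add_top_of_ne_bot]
    | top => simp [EReal.add_bot]
    | coe b =>
      rw [← EReal.coe_neg, ← EReal.coe_add, ← EReal.coe_neg, ← EReal.coe_add, EReal.coe_le_coe_iff]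
      ring_nf; rfl

-- a + -(l + a) ≤ -l
lemma aux2 (a l : EReal) : a + -(l + a) ≤ -l := by
  induction a using EReal.rec with
  | bot => rw [EReal.bot_add]; exact bot_le
  | top =>
    induction l using EReal.rec with
    | bot => simp
    | top => simp
    | coe l => simp [EReal.top_add_of_ne_bot, EReal.add_bot]
  | coe a =>
    induction l using EReal.rec with
    | bot => simp [EReal.bot_add, EReal.add_top_of_ne_bot]
    | top => simp [EReal.top_add_of_ne_bot, EReal.add_bot]
    | coe l =>
      rw [← EReal.coe_add, ← EReal.coe_neg, ← EReal.coe_add, ← EReal.coe_neg, EReal.coe_le_coe_iff]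
      ring_nf; rfl

-- c + b ≤ a → c + -a ≤ -b
lemma aux3 {a b c : EReal} (h : c + b ≤ a) : c + -a ≤ -b := by
  induction c using EReal.rec with
  | bot => rw [EReal.bot_add]; exact bot_le
  | top =>
    induction b using EReal.rec with
    | bot => simp
    | top =>
      rw [EReal.top_add_of_ne_bot (by simp)] at h
      rw [top_le_iff.mp h]; simp
    | coe b =>
      rw [EReal.top_add_of_ne_bot (by simp)] at h
      rw [top_le_iff.mp h]; simp
  | coe c =>
    induction b using EReal.rec with
    | bot => simp
    | top =>
      rw [EReal.add_top_of_ne_bot (by simp)] at h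
      rw [top_le_iff.mp h]; simp [EReal.add_bot]
    | coe b =>
      induction a using EReal.rec with
      | bot =>
        rw [← EReal.coe_add, le_bot_iff] at h; exact absurd h (by simp)
      | top => simp [EReal.add_bot]
      | coe a =>
        rw [← EReal.coe_add, EReal.coe_le_coe_iff] at h
        rw [← EReal.coe_neg, ← EReal.coe_neg, ← EReal.coe_add, EReal.coe_le_coe_iff]
        linarith

-- -(c + a) = -c + -a for real c
lemma aux4 (c : ℝ) (a : EReal) : -((c : EReal) + a) = ((-c : ℝ) : EReal) + -a := by
  induction a using EReal.rec with
  | bot => simp [EReal.add_bot, EReal.add_top_of_ne_bot]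
  | top => simp [EReal.add_top_of_ne_bot, EReal.add_bot]
  | coe a =>
    rw [← EReal.coe_add, ← EReal.coe_neg, ← EReal.coe_neg, ← EReal.coe_add]
    exact congrArg _ (by ring)

open Classical

/-- The residual bracket `⟨x|y⟩` on `EReal`-vectors. -/
noncomputable def bracket {n : ℕ} (x y : Fin n → EReal) : EReal :=
  sSup {c : EReal | ∀ i, c + x i ≤ y i}

/-- The Hilbert projective distance. -/
noncomputable def dH {n : ℕ} (x y : Fin n → EReal) : EReal :=
  if ∃ c : ℝ, y = fun i => (c : EReal) + x i then 0
  else -(bracket x y + bracket y x)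

lemma key_le {p q : ℕ} (A : Matrix (Fin p) (Fin q) EReal) (x y : Fin q → EReal) (c : EReal)
    (h : ∀ j, c + y j ≤ x j) : ∀ i, c + theta A x i ≤ theta A y i := by
  intro i
  simp only [theta]
  rw [eadd_iSup]
  refine iSup_le fun j => ?_
  have h3 : c + -(x j) ≤ -(y j) := aux3 (h j)
  calc c + (A i j + -x j) = A i j + (c + -x j) := by
        rw [← add_assoc, add_comm c (A i j), add_assoc]
    _ ≤ A i j + -y j := add_le_add_right h3 _
    _ ≤ ⨆ k, A i k + -y k := le_iSup (fun k => A i k + -y k) j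

lemma retract {p q : ℕ} (A : Matrix (Fin p) (Fin q) EReal) (x : Fin q → EReal)
    (hx : x ∈ rowSpace A) : theta A.transpose (theta A x) = x := by
  obtain ⟨lam, hlam⟩ := hx
  funext j
  refine le_antisymm ?_ ?_
  · simp only [theta, Matrix.transpose_apply]
    refine iSup_le fun i => ?_
    have h2 : -(⨆ k, A i k + -x k) ≤ -(A i j + -x j) :=
      EReal.neg_le_neg_iff.mpr (le_iSup (fun k => A i k + -x k) j)
    calc A i j + -(⨆ k, A i k + -x k) ≤ A i j + -(A i j + -x j) := add_le_add_right h2 _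
      _ ≤ x j := aux1 _ _
  · rw [hlam j]
    refine iSup_le fun i => ?_
    have hθ : theta A x i ≤ -lam i := by
      simp only [theta]
      refine iSup_le fun k => ?_
      have h1 : lam i + A i k ≤ x k := (hlam k) ▸ le_iSup (fun i' => lam i' + A i' k) i
      have h2 : -(x k) ≤ -(lam i + A i k) := EReal.neg_le_neg_iff.mpr h1
      calc A i k + -x k ≤ A i k + -(lam i + A i k) := add_le_add_right h2 _
        _ ≤ -lam i := aux2 _ _
    have h3 : lam i ≤ -(theta A x i) := EReal.le_neg_of_le_neg hθ
    simp only [theta, Matrix.transpose_apply]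
    calc lam i + A i j = A i j + lam i := add_comm _ _
      _ ≤ A i j + -(theta A x i) := add_le_add_right h3 _
      _ ≤ ⨆ i', A i' j + -(theta A x i') := le_iSup (fun i' => A i' j + -(theta A x i')) i

lemma theta_shift {p q : ℕ} (A : Matrix (Fin p) (Fin q) EReal) (x : Fin q → EReal) (c : ℝ) :
    theta A (fun j => (c : EReal) + x j) = fun i => ((-c : ℝ) : EReal) + theta A x i := by
  funext i
  simp only [theta]
  rw [eadd_iSup]
  congr 1; funext j
  rw [aux4, ← add_assoc, add_comm (A i j) _, add_assoc]

lemma bracket_theta {p q : ℕ} (A : Matrix (Fin p) (Fin q) EReal) (x y : Fin q → EReal)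
    (hx : x ∈ rowSpace A) (hy : y ∈ rowSpace A) :
    bracket (theta A x) (theta A y) = bracket y x := by
  unfold bracket
  congr 1
  ext c
  simp only [Set.mem_setOf_eq]
  constructor
  · intro h j
    have h2 := key_le A.transpose (theta A y) (theta A x) c h j
    rwa [retract A x hx, retract A y hy] at h2
  · intro h
    exact key_le A x y c h

theorem stmt_2 (p q : ℕ) (A : Matrix (Fin p) (Fin q) EReal) :
    ∀ x ∈ rowSpace A, ∀ y ∈ rowSpace A,
      dH (theta A x) (theta A y) = dH x y := by
  intro x hx y hy
  have hbr1 := bracket_theta A x y hx hy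
  have hbr2 := bracket_theta A y x hy hx
  have hcond : (∃ c : ℝ, theta A y = fun i => (c : EReal) + theta A x i) ↔
      (∃ c : ℝ, y = fun i => (c : EReal) + x i) := by
    constructor
    · rintro ⟨c, hc⟩
      refine ⟨-c, ?_⟩
      have hr := retract A y hy
      rw [hc] at hr
      rw [← hr, theta_shift, retract A x hx]
    · rintro ⟨c, hc⟩
      exact ⟨-c, by rw [hc, theta_shift]⟩
  simp only [dH, hbr1, hbr2, add_comm (bracket y x) (bracket x y)]
  exact if_congr hcond rfl rfl
end

section
/- (Exact Duality Theorem.) Let m n : ℕ, let u : Fin m → (Fin n → EReal) and v : Fin n → (Fin m → EReal), and set X := {x : Fin n → EReal | ∃ lam : Fin m → EReal, ∀ j, x j = ⨆ i, lam i + u i j} (an m-generated convex subset of EReal^n) and Y := {y : Fin m → EReal | ∃ mu : Fin n → EReal, ∀ i, y i = ⨆ j, mu j + v j i} (an n-generated convex subset of EReal^m). Then the following are equivalent: (1) there exists a map θ : (Fin n → EReal) → (Fin m → EReal) that maps X bijectively onto Y, satisfies ⟨a|b⟩ = ⟨θ b | θ a⟩ for all a, b ∈ X, and satisfies θ (fun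 j => (c : EReal) + a j) = fun i => ((-c : ℝ) : EReal) + θ a i for all a ∈ X and c : ℝ (i.e. X and Y are anti-isomorphic); (2) there exists a matrix M : Matrix (Fin m) (Fin n) EReal with R(M) = X and C(M) = Y. -/
namespace ED


lemma add_iSup' {ι : Sort*} (a : EReal) (f : ι → EReal) : a + (⨆ i, f i) = ⨆ i, a + f i := by
  apply le_antisymm _ (iSup_le fun i => add_le_add_right (le_iSup f i) a)
  induction a using EReal.rec with
  | bot => simp
  | top =>
    rcases eq_or_ne (⨆ i, f i) ⊥ with h | h
    · rw [h, EReal.add_bot]; exact bot_le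
    · have hex : ∃ i, f i ≠ ⊥ := by
        by_contra hc
        push_neg at hc
        exact h (by simp [iSup_eq_bot, hc])
      obtain ⟨i, hi⟩ := hex
      calc (⊤ : EReal) + ⨆ i, f i = ⊤ := EReal.top_add_of_ne_bot h
        _ = ⊤ + f i := (EReal.top_add_of_ne_bot hi).symm
        _ ≤ ⨆ i, ⊤ + f i := le_iSup (fun i => (⊤ : EReal) + f i) i
  | coe r =>
    have h2 : (⨆ i, f i) ≤ ((-r : ℝ) : EReal) + ⨆ i', (r : EReal) + f i' := by
      apply iSup_le
      intro i
      have he : ((-r : ℝ) : EReal) + ((r : EReal) + f i) = f i := by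
        rw [← add_assoc, ← EReal.coe_add]
        norm_num
      rw [← he]
      exact add_le_add_right (le_iSup (fun i' => (r : EReal) + f i') i) _
    calc (r : EReal) + ⨆ i, f i ≤ (r : EReal) + (((-r : ℝ) : EReal) + ⨆ i', (r : EReal) + f i') :=
          add_le_add_right h2 _
      _ = ⨆ i', (r : EReal) + f i' := by
          rw [← add_assoc, ← EReal.coe_add]
          norm_num

lemma iSup_add' {ι : Sort*} (f : ι → EReal) (a : EReal) : (⨆ i, f i) + a = ⨆ i, f i + a := by
  rw [add_comm, add_iSup']
  exact iSup_congr fun i => add_comm _ _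

lemma le_neg_iff {a b : EReal} : a ≤ -b ↔ a + b ≤ 0 := by
  induction a using EReal.rec with
  | bot => simp
  | top =>
    induction b using EReal.rec with
    | bot => simp
    | coe r => simp [EReal.top_add_coe]
    | top => simp [EReal.top_add_top]
  | coe r =>
    induction b using EReal.rec with
    | bot => simp
    | coe s =>
      rw [← EReal.coe_neg, EReal.coe_le_coe_iff, ← EReal.coe_add, ← EReal.coe_zero,
        EReal.coe_le_coe_iff]
      constructor <;> intro h <;> linarith
    | top => simp [EReal.coe_add_top]

lemma add_neg_le (a : EReal) : a + (-a) ≤ 0 :=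
  le_neg_iff.mp (by rw [neg_neg])

lemma key4 (a c : EReal) : -(a + c) + c ≤ -a := by
  apply le_neg_iff.2
  rw [add_assoc, add_comm c a, add_comm (-(a + c)) (a + c)]
  exact add_neg_le _



variable {n : ℕ}

lemma le_bracket {x y : Fin n → EReal} {c : EReal} (h : ∀ i, c + x i ≤ y i) :
    c ≤ bracket x y := le_sSup h

lemma bracket_add_le (x y : Fin n → EReal) (i : Fin n) : bracket x y + x i ≤ y i := by
  rw [bracket, sSup_eq_iSup', iSup_add']
  exact iSup_le fun c => c.2 i

lemma bracket_mono_right {x y y' : Fin n → EReal} (h : ∀ i, y i ≤ y' i) :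
    bracket x y ≤ bracket x y' :=
  sSup_le_sSup fun c hc i => (hc i).trans (h i)

lemma neg_bracket (x y : Fin n → EReal) : -(bracket x y) = ⨆ i, x i + -(y i) := by
  apply le_antisymm
  · rw [EReal.neg_le]
    apply le_bracket
    intro i
    have h1 : x i + -(y i) ≤ ⨆ k, x k + -(y k) := le_iSup (fun k => x k + -(y k)) i
    have h2 : -(⨆ k, x k + -(y k)) ≤ -(x i + -(y i)) := EReal.neg_le_neg_iff.2 h1
    have h3 : -(x i + -(y i)) = -(-(y i) + x i) := by rw [add_comm]
    calc -(⨆ k, x k + -(y k)) + x i ≤ -(-(y i) + x i) + x i := by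
          rw [← h3]; exact add_le_add_left h2 _
      _ ≤ -(-(y i)) := key4 _ _
      _ = y i := neg_neg _
  · apply iSup_le
    intro i
    apply le_neg_iff.2
    rw [add_comm (x i) (-(y i)), add_assoc, add_comm (x i) (bracket x y)]
    calc -(y i) + (bracket x y + x i) ≤ -(y i) + y i := add_le_add_right (bracket_add_le x y i) _
      _ ≤ 0 := by rw [add_comm]; exact add_neg_le _



variable {p q : ℕ}

def span (g : Fin p → Fin q → EReal) : Set (Fin q → EReal) :=
  {x | ∃ lam : Fin p → EReal, ∀ j, x j = ⨆ i, lam i + g i j}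

lemma mem_span (g : Fin p → Fin q → EReal) (k : Fin p) : g k ∈ span g := by
  refine ⟨fun i => if i = k then 0 else ⊥, fun j => ?_⟩
  apply le_antisymm
  · have := le_iSup (fun i => (if i = k then (0 : EReal) else ⊥) + g i j) k
    simpa using this
  · apply iSup_le
    intro i
    by_cases h : i = k
    · subst h; simp
    · simp [h]

lemma span_rep {g : Fin p → Fin q → EReal} {x : Fin q → EReal} (hx : x ∈ span g) (j : Fin q) :
    x j = ⨆ i, bracket (g i) x + g i j := by
  obtain ⟨lam, hlam⟩ := hx
  apply le_antisymm
  · rw [hlam j]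
    apply iSup_le
    intro i
    have hli : lam i ≤ bracket (g i) x :=
      le_bracket fun j' => by rw [hlam j']; exact le_iSup (fun k => lam k + g k j') i
    exact le_trans (add_le_add_left hli _) (le_iSup (fun i => bracket (g i) x + g i j) i)
  · exact iSup_le fun i => bracket_add_le (g i) x j

noncomputable def proj (g : Fin p → Fin q → EReal) (z : Fin q → EReal) : Fin q → EReal :=
  fun j => ⨆ i, bracket (g i) z + g i j

lemma proj_mem (g : Fin p → Fin q → EReal) (z : Fin q → EReal) : proj g z ∈ span g :=
  ⟨fun i => bracket (g i) z, fun _ => rfl⟩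

lemma proj_le (g : Fin p → Fin q → EReal) (z : Fin q → EReal) (j : Fin q) :
    proj g z j ≤ z j :=
  iSup_le fun i => bracket_add_le (g i) z j

lemma le_proj {g : Fin p → Fin q → EReal} {x z : Fin q → EReal} (hx : x ∈ span g)
    (hxz : ∀ j, x j ≤ z j) (j : Fin q) : x j ≤ proj g z j := by
  rw [span_rep hx j]
  exact iSup_mono fun i => add_le_add_left (bracket_mono_right hxz) _

lemma span_smul {g : Fin p → Fin q → EReal} (c : EReal) {x : Fin q → EReal}
    (hx : x ∈ span g) : (fun j => c + x j) ∈ span g := by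
  obtain ⟨lam, hlam⟩ := hx
  exact ⟨fun i => c + lam i, fun j => by
    show c + x j = ⨆ i, (c + lam i) + g i j
    rw [hlam j, add_iSup']
    exact iSup_congr fun i => (add_assoc c (lam i) (g i j)).symm⟩

noncomputable def ebar (j : Fin q) : Fin q → EReal := fun j' => if j' = j then 0 else ⊤

lemma bracket_coord {g : Fin p → Fin q → EReal} {x : Fin q → EReal} (hx : x ∈ span g)
    (j : Fin q) : bracket x (proj g (ebar j)) = -(x j) := by
  apply le_antisymm
  · apply le_neg_iff.2
    calc bracket x (proj g (ebar j)) + x j ≤ proj g (ebar j) j := bracket_add_le _ _ j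
      _ ≤ ebar j j := proj_le g (ebar j) j
      _ = 0 := by simp [ebar]
  · apply le_bracket
    intro j'
    refine le_proj (span_smul (-(x j)) hx) (fun j'' => ?_) j'
    by_cases h : j'' = j
    · subst h
      simp only [ebar, if_pos rfl]
      rw [add_comm]
      exact add_neg_le _
    · simp [ebar, h]

lemma bracket_proj {g : Fin p → Fin q → EReal} {w : Fin q → EReal} (hw : w ∈ span g)
    (z : Fin q → EReal) : bracket w z = bracket w (proj g z) := by
  apply le_antisymm
  · apply le_bracket
    intro j
    exact le_proj (span_smul (bracket w z) hw) (fun j' => bracket_add_le w z j') j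
  · exact bracket_mono_right (proj_le g z)



variable {p q : ℕ}


def tr (M : Fin p → Fin q → EReal) : Fin q → Fin p → EReal := fun j i => M i j

noncomputable def thetaM (M : Fin p → Fin q → EReal) (x : Fin q → EReal) : Fin p → EReal :=
  fun i => ⨆ j, -(x j) + M i j

lemma thetaM_mem (M : Fin p → Fin q → EReal) (x : Fin q → EReal) :
    thetaM M x ∈ span (tr M) :=
  ⟨fun j => -(x j), fun _ => rfl⟩

lemma closure_inv (M : Fin p → Fin q → EReal) {x : Fin q → EReal} (hx : x ∈ span M) :
    thetaM (tr M) (thetaM M x) = x := by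
  funext j
  apply le_antisymm
  · apply iSup_le
    intro i
    show -(thetaM M x i) + M i j ≤ x j
    have h1 : -(x j) + M i j ≤ thetaM M x i := le_iSup (fun j' => -(x j') + M i j') j
    have h2 : -(thetaM M x i) ≤ -(-(x j) + M i j) := EReal.neg_le_neg_iff.2 h1
    calc -(thetaM M x i) + M i j ≤ -(-(x j) + M i j) + M i j := add_le_add_left h2 _
      _ ≤ -(-(x j)) := key4 _ _
      _ = x j := neg_neg _
  · obtain ⟨lam, hlam⟩ := hx
    rw [hlam j]
    apply iSup_le
    intro k
    have hk : thetaM M x k ≤ -(lam k) := by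
      apply iSup_le
      intro j'
      apply le_neg_iff.2
      rw [add_assoc, add_comm (M k j') (lam k)]
      have hx' : lam k + M k j' ≤ x j' := by
        rw [hlam j']; exact le_iSup (fun i => lam i + M i j') k
      calc -(x j') + (lam k + M k j') ≤ -(x j') + x j' := add_le_add_right hx' _
        _ ≤ 0 := by rw [add_comm]; exact add_neg_le _
    have hk' : lam k ≤ -(thetaM M x k) := EReal.le_neg_of_le_neg hk
    calc lam k + M k j ≤ -(thetaM M x k) + M k j := add_le_add_left hk' _
      _ ≤ ⨆ i, -(thetaM M x i) + tr M j i := le_iSup (fun i => -(thetaM M x i) + tr M j i) k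

lemma rev_le (M : Fin p → Fin q → EReal) (a b : Fin q → EReal) :
    bracket a b ≤ bracket (thetaM M b) (thetaM M a) := by
  apply sSup_le_sSup
  intro c hc i
  show c + thetaM M b i ≤ thetaM M a i
  have : thetaM M b i = ⨆ j, -(b j) + M i j := rfl
  rw [this, add_iSup']
  apply iSup_le
  intro j
  have h1 : c + -(b j) ≤ -(a j) := by
    apply le_neg_iff.2
    rw [add_comm c (-(b j)), add_assoc]
    calc -(b j) + (c + a j) ≤ -(b j) + b j := add_le_add_right (hc j) _
      _ ≤ 0 := by rw [add_comm]; exact add_neg_le _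
  calc c + (-(b j) + M i j) = (c + -(b j)) + M i j := (add_assoc _ _ _).symm
    _ ≤ -(a j) + M i j := add_le_add_left h1 _
    _ ≤ thetaM M a i := le_iSup (fun j' => -(a j') + M i j') j

lemma neg_coe_add (c : ℝ) (a : EReal) : -((c : EReal) + a) = ((-c : ℝ) : EReal) + -a := by
  rw [EReal.neg_add (Or.inl (EReal.coe_ne_bot c)) (Or.inl (EReal.coe_ne_top c)),
    EReal.coe_neg, sub_eq_add_neg]

end ED

/-- Exact Duality Theorem: two finitely generated convex sets are anti-isomorphic
iff they are the row space and column space of a single matrix. -/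
theorem stmt_3 (m n : ℕ) (u : Fin m → (Fin n → EReal)) (v : Fin n → (Fin m → EReal))
    (X : Set (Fin n → EReal)) (Y : Set (Fin m → EReal))
    (hX : X = {x : Fin n → EReal | ∃ lam : Fin m → EReal, ∀ j, x j = ⨆ i, lam i + u i j})
    (hY : Y = {y : Fin m → EReal | ∃ mu : Fin n → EReal, ∀ i, y i = ⨆ j, mu j + v j i}) :
    (∃ θ : (Fin n → EReal) → (Fin m → EReal),
      Set.BijOn θ X Y ∧
      (∀ a ∈ X, ∀ b ∈ X, bracket a b = bracket (θ b) (θ a)) ∧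
      (∀ a ∈ X, ∀ c : ℝ,
        θ (fun j => (c : EReal) + a j) = fun i => ((-c : ℝ) : EReal) + θ a i)) ↔
    (∃ M : Matrix (Fin m) (Fin n) EReal, rowSpace M = X ∧ colSpace M = Y) := by
  have hX' : X = ED.span u := hX
  have hY' : Y = ED.span v := hY
  subst hX'
  subst hY'
  constructor
  · -- (1) → (2): construct the matrix from the anti-isomorphism
    rintro ⟨θ, hbij, hbr, -⟩
    classical
    have hsurj : ∀ y ∈ ED.span v, ∃ x, x ∈ ED.span u ∧ θ x = y := fun y hy => by
      obtain ⟨x, hx, hxy⟩ := hbij.surjOn hy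
      exact ⟨x, hx, hxy⟩
    set φ : (Fin m → EReal) → (Fin n → EReal) := fun y =>
      if h : y ∈ ED.span v then (hsurj y h).choose else fun _ => ⊥ with hφ
    have hφmem : ∀ y ∈ ED.span v, φ y ∈ ED.span u := fun y hy => by
      rw [hφ]; simp only [dif_pos hy]; exact (hsurj y hy).choose_spec.1
    have hθφ : ∀ y ∈ ED.span v, θ (φ y) = y := fun y hy => by
      rw [hφ]; simp only [dif_pos hy]; exact (hsurj y hy).choose_spec.2
    have hφθ : ∀ x ∈ ED.span u, φ (θ x) = x := fun x hx =>
      hbij.injOn (hφmem _ (hbij.mapsTo hx)) hx (hθφ _ (hbij.mapsTo hx))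
    have hbrY : ∀ y1 ∈ ED.span v, ∀ y2 ∈ ED.span v,
        bracket y1 y2 = bracket (φ y2) (φ y1) := fun y1 h1 y2 h2 => by
      have h := hbr (φ y2) (hφmem _ h2) (φ y1) (hφmem _ h1)
      rw [hθφ _ h1, hθφ _ h2] at h
      exact h.symm
    have hθxh : ∀ j : Fin n, θ (ED.proj u (ED.ebar j)) ∈ ED.span v :=
      fun j => hbij.mapsTo (ED.proj_mem u (ED.ebar j))
    have hφyh : ∀ i : Fin m, φ (ED.proj v (ED.ebar i)) ∈ ED.span u :=
      fun i => hφmem _ (ED.proj_mem v (ED.ebar i))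
    -- the key symmetry
    have K : ∀ (i : Fin m) (j : Fin n),
        θ (ED.proj u (ED.ebar j)) i = φ (ED.proj v (ED.ebar i)) j := by
      intro i j
      have h1 : bracket (θ (ED.proj u (ED.ebar j))) (ED.proj v (ED.ebar i))
          = -(θ (ED.proj u (ED.ebar j)) i) := ED.bracket_coord (hθxh j) i
      have h2 : bracket (θ (ED.proj u (ED.ebar j))) (ED.proj v (ED.ebar i))
          = bracket (φ (ED.proj v (ED.ebar i))) (φ (θ (ED.proj u (ED.ebar j)))) :=
        hbrY _ (hθxh j) _ (ED.proj_mem v (ED.ebar i))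
      rw [hφθ _ (ED.proj_mem u (ED.ebar j))] at h2
      have h3 : bracket (φ (ED.proj v (ED.ebar i))) (ED.proj u (ED.ebar j))
          = -(φ (ED.proj v (ED.ebar i)) j) := ED.bracket_coord (hφyh i) j
      have h4 : -(θ (ED.proj u (ED.ebar j)) i) = -(φ (ED.proj v (ED.ebar i)) j) := by
        rw [← h1, h2, h3]
      exact neg_inj.1 h4
    refine ⟨fun i j => θ (ED.proj u (ED.ebar j)) i, ?_, ?_⟩
    · -- rowSpace = X
      apply Set.eq_of_subset_of_subset
      · rintro z ⟨lam, hlam⟩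
        have hw : φ (ED.proj v (fun i => -(lam i))) ∈ ED.span u :=
          hφmem _ (ED.proj_mem v (fun i => -(lam i)))
        have hz : z = φ (ED.proj v (fun i => -(lam i))) := by
          funext j
          calc z j = ⨆ i, lam i + θ (ED.proj u (ED.ebar j)) i := hlam j
            _ = ⨆ i, θ (ED.proj u (ED.ebar j)) i + -((fun i => -(lam i)) i) :=
                iSup_congr fun i => by rw [neg_neg]; exact add_comm _ _
            _ = -(bracket (θ (ED.proj u (ED.ebar j))) (fun i => -(lam i))) :=
                (ED.neg_bracket _ _).symm
            _ = -(bracket (θ (ED.proj u (ED.ebar j))) (ED.proj v (fun i => -(lam i)))) := by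
                rw [← ED.bracket_proj (hθxh j) (fun i => -(lam i))]
            _ = -(bracket (φ (ED.proj v (fun i => -(lam i)))) (φ (θ (ED.proj u (ED.ebar j))))) :=
                by rw [hbrY _ (hθxh j) _ (ED.proj_mem v (fun i => -(lam i)))]
            _ = -(bracket (φ (ED.proj v (fun i => -(lam i)))) (ED.proj u (ED.ebar j))) := by
                rw [hφθ _ (ED.proj_mem u (ED.ebar j))]
            _ = -(-(φ (ED.proj v (fun i => -(lam i))) j)) := by rw [ED.bracket_coord hw j]
            _ = φ (ED.proj v (fun i => -(lam i))) j := neg_neg _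
        rw [hz]
        exact hw
      · intro x hx
        refine ⟨fun i => -(θ x i), fun j => ?_⟩
        show x j = ⨆ i, -(θ x i) + θ (ED.proj u (ED.ebar j)) i
        calc x j = -(-(x j)) := (neg_neg _).symm
          _ = -(bracket x (ED.proj u (ED.ebar j))) := by rw [ED.bracket_coord hx j]
          _ = -(bracket (θ (ED.proj u (ED.ebar j))) (θ x)) := by
              rw [hbr x hx _ (ED.proj_mem u (ED.ebar j))]
          _ = ⨆ i, θ (ED.proj u (ED.ebar j)) i + -(θ x i) := ED.neg_bracket _ _
          _ = ⨆ i, -(θ x i) + θ (ED.proj u (ED.ebar j)) i := iSup_congr fun i => add_comm _ _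
    · -- colSpace = Y
      apply Set.eq_of_subset_of_subset
      · rintro z ⟨mu, hmu⟩
        have hwv : θ (ED.proj u (fun j => -(mu j))) ∈ ED.span v :=
          hbij.mapsTo (ED.proj_mem u (fun j => -(mu j)))
        have hz : z = θ (ED.proj u (fun j => -(mu j))) := by
          funext i
          calc z i = ⨆ j, mu j + θ (ED.proj u (ED.ebar j)) i := hmu i
            _ = ⨆ j, φ (ED.proj v (ED.ebar i)) j + -((fun j => -(mu j)) j) :=
                iSup_congr fun j => by rw [neg_neg, ← K i j]; exact add_comm _ _
            _ = -(bracket (φ (ED.proj v (ED.ebar i))) (fun j => -(mu j))) :=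
                (ED.neg_bracket _ _).symm
            _ = -(bracket (φ (ED.proj v (ED.ebar i))) (ED.proj u (fun j => -(mu j)))) := by
                rw [← ED.bracket_proj (hφyh i) (fun j => -(mu j))]
            _ = -(bracket (θ (ED.proj u (fun j => -(mu j)))) (θ (φ (ED.proj v (ED.ebar i))))) :=
                by rw [hbr _ (hφyh i) _ (ED.proj_mem u (fun j => -(mu j)))]
            _ = -(bracket (θ (ED.proj u (fun j => -(mu j)))) (ED.proj v (ED.ebar i))) := by
                rw [hθφ _ (ED.proj_mem v (ED.ebar i))]
            _ = -(-(θ (ED.proj u (fun j => -(mu j))) i)) := by rw [ED.bracket_coord hwv i]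
            _ = θ (ED.proj u (fun j => -(mu j))) i := neg_neg _
        rw [hz]
        exact hwv
      · intro y hy
        refine ⟨fun j => -(φ y j), fun i => ?_⟩
        show y i = ⨆ j, -(φ y j) + θ (ED.proj u (ED.ebar j)) i
        calc y i = -(-(y i)) := (neg_neg _).symm
          _ = -(bracket y (ED.proj v (ED.ebar i))) := by rw [ED.bracket_coord hy i]
          _ = -(bracket (φ (ED.proj v (ED.ebar i))) (φ y)) := by
              rw [hbrY y hy _ (ED.proj_mem v (ED.ebar i))]
          _ = ⨆ j, φ (ED.proj v (ED.ebar i)) j + -(φ y j) := ED.neg_bracket _ _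
          _ = ⨆ j, -(φ y j) + θ (ED.proj u (ED.ebar j)) i :=
              iSup_congr fun j => by rw [← K i j]; exact add_comm _ _
  · -- (2) → (1): residuation-type anti-isomorphism x ↦ M ⊙ (-x)
    rintro ⟨M, hR, hC⟩
    have hRX : ED.span u = ED.span (fun i j => M i j) := hR.symm
    have hCY : ED.span v = ED.span (ED.tr (fun i j => M i j)) := hC.symm
    set N : Fin m → Fin n → EReal := fun i j => M i j with hN
    refine ⟨ED.thetaM N, ⟨?_, ?_, ?_⟩, ?_, ?_⟩
    · -- MapsTo
      intro x hx
      rw [hCY]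
      exact ED.thetaM_mem N x
    · -- InjOn
      intro a ha b hb hab
      have ha' : a ∈ ED.span N := hRX ▸ ha
      have hb' : b ∈ ED.span N := hRX ▸ hb
      rw [← ED.closure_inv N ha', ← ED.closure_inv N hb', hab]
    · -- SurjOn
      intro y hy
      have hy' : y ∈ ED.span (ED.tr N) := hCY ▸ hy
      refine ⟨ED.thetaM (ED.tr N) y, ?_, ?_⟩
      · rw [hRX]
        exact ED.thetaM_mem (ED.tr N) y
      · exact ED.closure_inv (ED.tr N) hy'
    · -- bracket reversal
      intro a ha b hb
      have ha' : a ∈ ED.span N := hRX ▸ ha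
      have hb' : b ∈ ED.span N := hRX ▸ hb
      apply le_antisymm (ED.rev_le N a b)
      have h2 := ED.rev_le (ED.tr N) (ED.thetaM N b) (ED.thetaM N a)
      rwa [ED.closure_inv N ha', ED.closure_inv N hb'] at h2
    · -- homogeneity
      intro a _ c
      funext i
      show ⨆ j, -((c : EReal) + a j) + N i j = ((-c : ℝ) : EReal) + ⨆ j, -(a j) + N i j
      rw [ED.add_iSup']
      exact iSup_congr fun j => by rw [ED.neg_coe_add, add_assoc]
end

section
/- (Green's 𝒟 relation for tropical matrices.) Let n : ℕ and A B : Matrix (Fin n) (Fin n) EReal. Then the following are equivalent: (1) there exists D : Matrix (Fin n) (Fin n) EReal with R(A) = R(D) and C(D) = C(B) (i.e. A and B are 𝒟-related in the multiplicative semigroup of n × n matrices over the completed tropical semiring); (2) C(A) and C(B) are isomorphic as semimodules, i.e. there exist f, g : (Fin n → EReal) → (Fin n → EReal) such that f u ∈ C(B) for all u ∈ C(A), g v ∈ C(A) for all v ∈ C(B), g (f u) = u for all u ∈ C(A), f (g v) = v for all v ∈ C(B), f (u ⊔ v) = f u ⊔ f v for all u, v ∈ C(A), and f (fun i => c + u i)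 = fun i => c + f u i for all u ∈ C(A) and c : EReal. -/
namespace TropD

/-- Tropical residuation on `EReal`. -/
noncomputable def tres (a b : EReal) : EReal :=
  if a = ⊥ then ⊤ else if b = ⊤ then ⊤ else b - a

lemma tres_galois (a b z : EReal) : z ≤ tres a b ↔ a + z ≤ b := by
  unfold tres
  induction a using EReal.rec with
  | bot => simp
  | top =>
    simp only [if_neg (by simp : (⊤:EReal) ≠ ⊥)]
    by_cases hb : b = ⊤
    · simp [hb]
    · rw [if_neg hb]
      have : b - ⊤ = ⊥ := by simp
      rw [this, le_bot_iff]
      constructor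
      · rintro rfl; simp
      · intro h
        by_contra hz
        rw [EReal.top_add_of_ne_bot hz] at h
        exact hb (top_le_iff.mp h)
  | coe a =>
    simp only [if_neg (by simp : ((a:ℝ):EReal) ≠ ⊥)]
    by_cases hb : b = ⊤
    · simp [hb]
    · rw [if_neg hb]
      induction b using EReal.rec with
      | top => exact absurd rfl hb
      | bot =>
        have : (⊥:EReal) - a = ⊥ := by simp
        rw [this, le_bot_iff, le_bot_iff]
        simp [EReal.add_eq_bot_iff]
      | coe b =>
        induction z using EReal.rec with
        | bot => simp
        | top =>
          have h1 : ¬ (⊤ : EReal) ≤ ↑b - ↑a := by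
            rw [← EReal.coe_sub, top_le_iff]; exact EReal.coe_ne_top _
          have h2 : ¬ ((a:EReal) + (⊤:EReal)) ≤ ↑b := by
            rw [EReal.coe_add_top]; simp
          simp [h1, h2]
        | coe z =>
          rw [← EReal.coe_sub, EReal.coe_le_coe_iff, ← EReal.coe_add, EReal.coe_le_coe_iff]
          constructor <;> intro h <;> linarith

lemma add_tres_le (a b : EReal) : a + tres a b ≤ b := (tres_galois a b _).mp le_rfl

lemma le_tres {a b z : EReal} (h : a + z ≤ b) : z ≤ tres a b := (tres_galois a b z).mpr h

lemma tres_bot (b : EReal) : tres ⊥ b = ⊤ := by simp [tres]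

lemma tres_top (a : EReal) : tres a ⊤ = ⊤ := by
  unfold tres; split <;> simp

lemma tres_coe_ne_bot (x : ℝ) {s : EReal} (hs : s ≠ ⊥) : tres (x:EReal) s ≠ ⊥ := by
  unfold tres
  rw [if_neg (by simp)]
  by_cases h : s = ⊤
  · simp [h]
  · rw [if_neg h]
    induction s using EReal.rec with
    | bot => exact absurd rfl hs
    | top => exact absurd rfl h
    | coe s => rw [← EReal.coe_sub]; exact EReal.coe_ne_bot _

lemma tres_coe_coe (x s : ℝ) : tres (x:EReal) (s:EReal) = ((s - x : ℝ) : EReal) := by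
  unfold tres
  rw [if_neg (by simp), if_neg (by simp), EReal.coe_sub]
lemma ereal_add_sup (a b c : EReal) : a + (b ⊔ c) = (a + b) ⊔ (a + c) := by
  rcases le_total b c with h | h
  · rw [sup_eq_right.mpr h, sup_eq_right.mpr (add_le_add_right h a)]
  · rw [sup_eq_left.mpr h, sup_eq_left.mpr (add_le_add_right h a)]

lemma fin_iSup_attained {m : ℕ} (f : Fin (m+1) → EReal) : ∃ k, (⨆ j, f j) = f k := by
  obtain ⟨k, hk⟩ := Finite.exists_max f
  exact ⟨k, le_antisymm (iSup_le hk) (le_iSup f k)⟩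

lemma ereal_add_iSup {m : ℕ} (a : EReal) (f : Fin m → EReal) :
    a + ⨆ k, f k = ⨆ k, a + f k := by
  cases m with
  | zero => simp
  | succ m =>
    obtain ⟨k, hk⟩ := fin_iSup_attained f
    rw [hk]
    refine le_antisymm (le_iSup (fun k => a + f k) k) (iSup_le fun j => ?_)
    exact add_le_add_right (hk ▸ le_iSup f j) a

lemma ereal_iSup_add {m : ℕ} (f : Fin m → EReal) (a : EReal) :
    (⨆ k, f k) + a = ⨆ k, f k + a := by
  rw [add_comm, ereal_add_iSup]
  exact iSup_congr fun k => add_comm _ _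

/-- Tropical matrix-vector multiplication. -/
noncomputable def mv {p q : ℕ} (B : Matrix (Fin p) (Fin q) EReal) (μ : Fin q → EReal) :
    Fin p → EReal :=
  fun i => ⨆ k, μ k + B i k

lemma mem_colSpace {p q : ℕ} {B : Matrix (Fin p) (Fin q) EReal} {y : Fin p → EReal} :
    y ∈ colSpace B ↔ ∃ μ, y = mv B μ := by
  constructor
  · rintro ⟨μ, hμ⟩; exact ⟨μ, funext hμ⟩
  · rintro ⟨μ, rfl⟩; exact ⟨μ, fun i => rfl⟩

lemma mem_rowSpace {p q : ℕ} {A : Matrix (Fin p) (Fin q) EReal} {x : Fin q → EReal} :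
    x ∈ rowSpace A ↔ ∃ lam, x = mv A.transpose lam := by
  constructor
  · rintro ⟨lam, hlam⟩; exact ⟨lam, funext hlam⟩
  · rintro ⟨lam, rfl⟩; exact ⟨lam, fun j => rfl⟩

/-- unit vector -/
noncomputable def unit {q : ℕ} (k₀ : Fin q) : Fin q → EReal :=
  fun k => if k = k₀ then (0:EReal) else ⊥

lemma iSup_unit {q : ℕ} (k₀ : Fin q) (y : Fin q → EReal) :
    (⨆ k, unit k₀ k + y k) = y k₀ := by
  refine le_antisymm (iSup_le fun k => ?_) ?_
  · by_cases h : k = k₀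
    · subst h; simp [unit]
    · simp [unit, h]
  · have := le_iSup (fun k => unit k₀ k + y k) k₀
    simpa [unit] using this

lemma mv_unit {p q : ℕ} (B : Matrix (Fin p) (Fin q) EReal) (k₀ : Fin q) :
    mv B (unit k₀) = fun i => B i k₀ := by
  funext i; exact iSup_unit k₀ (fun k => B i k)

lemma mv_mono {p q : ℕ} (B : Matrix (Fin p) (Fin q) EReal) {μ μ' : Fin q → EReal}
    (h : μ ≤ μ') : mv B μ ≤ mv B μ' :=
  fun i => iSup_mono fun k => add_le_add_left (h k) _

lemma pair_mono {p : ℕ} (lam : Fin p → EReal) {v v' : Fin p → EReal} (h : v ≤ v') :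
    (⨆ i, lam i + v i) ≤ ⨆ i, lam i + v' i :=
  iSup_mono fun i => add_le_add_right (h i) _

lemma mv_sup {p q : ℕ} (B : Matrix (Fin p) (Fin q) EReal) (μ ν : Fin q → EReal) :
    mv B (μ ⊔ ν) = mv B μ ⊔ mv B ν := by
  funext i
  have : ∀ k, (μ ⊔ ν) k + B i k = (μ k + B i k) ⊔ (ν k + B i k) := by
    intro k
    rw [Pi.sup_apply, add_comm, ereal_add_sup, add_comm (B i k), add_comm (B i k)]
  show (⨆ k, (μ ⊔ ν) k + B i k) = _
  simp only [this]
  rw [Pi.sup_apply]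
  show _ = (⨆ k, μ k + B i k) ⊔ ⨆ k, ν k + B i k
  exact iSup_sup_eq

lemma mv_smul {p q : ℕ} (B : Matrix (Fin p) (Fin q) EReal) (c : EReal) (μ : Fin q → EReal) :
    mv B (fun k => c + μ k) = fun i => c + mv B μ i := by
  funext i
  show (⨆ k, (c + μ k) + B i k) = c + ⨆ k, μ k + B i k
  rw [ereal_add_iSup]
  exact iSup_congr fun k => (add_assoc c (μ k) (B i k))

/-- swap of pairing: `⟨μ, x⟩ = ⟨lam, mv A μ⟩` when `x = mv Aᵀ lam`. -/
lemma pair_swap {p q : ℕ} (A : Matrix (Fin p) (Fin q) EReal) (lam : Fin p → EReal)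
    (μ : Fin q → EReal) :
    (⨆ k, μ k + mv A.transpose lam k) = ⨆ i, lam i + mv A μ i := by
  have : ∀ k, μ k + mv A.transpose lam k = ⨆ i, μ k + (lam i + A i k) := by
    intro k
    rw [mv, ereal_add_iSup]
    rfl
  simp only [this]
  rw [iSup_comm]
  refine iSup_congr fun i => ?_
  rw [mv, ereal_add_iSup]
  refine iSup_congr fun k => ?_
  rw [← add_assoc, ← add_assoc, add_comm (μ k) (lam i)]
lemma ereal_cases (x : EReal) (h1 : x ≠ ⊥) (h2 : x ≠ ⊤) : ∃ r : ℝ, x = r := by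
  induction x using EReal.rec with
  | bot => exact absurd rfl h1
  | top => exact absurd rfl h2
  | coe r => exact ⟨r, rfl⟩

/-- The key representation lemma (Hollings–Kambites duality theorem): a functional on the
column space of `B` that is monotone w.r.t. the column space order is represented by a row. -/
lemma represent {p q : ℕ} (B : Matrix (Fin p) (Fin q) EReal) (x : Fin q → EReal)
    (H : ∀ μ μ' : Fin q → EReal, mv B μ ≤ mv B μ' → (⨆ k, μ k + x k) ≤ ⨆ k, μ' k + x k) :
    ∃ lam : Fin p → EReal, x = mv B.transpose lam := by
  set lam : Fin p → EReal := fun i => ⨅ k, tres (B i k) (x k) with hlam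
  have hmv : ∀ k₀, mv B.transpose lam k₀ = ⨆ i, lam i + B i k₀ := by
    intro k₀; simp only [mv, Matrix.transpose_apply]
  refine ⟨lam, funext fun k₀ => ?_⟩
  rw [hmv]
  have hle : (⨆ i, lam i + B i k₀) ≤ x k₀ := by
    refine iSup_le fun i => ?_
    have h1 : lam i ≤ tres (B i k₀) (x k₀) := iInf_le _ k₀
    calc lam i + B i k₀ ≤ tres (B i k₀) (x k₀) + B i k₀ := add_le_add_left h1 _
      _ = B i k₀ + tres (B i k₀) (x k₀) := add_comm _ _
      _ ≤ x k₀ := add_tres_le _ _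
  refine le_antisymm ?_ hle
  refine le_of_forall_gt_imp_ge_of_dense fun s hs => ?_
  have hsbot : (⊥ : EReal) < s := bot_le.trans_lt hs
  haveI : Nonempty (Fin q) := ⟨k₀⟩
  -- the key premise
  have key : mv B (unit k₀) ≤ mv B (fun k => tres (x k) s) := by
    intro i
    rw [congrFun (mv_unit B k₀) i]
    by_cases hc : B i k₀ = ⊥
    · rw [hc]; exact bot_le
    have hti : lam i + B i k₀ < s := (le_iSup (fun i => lam i + B i k₀) i).trans_lt hs
    obtain ⟨ks, hks⟩ := Finite.exists_min (fun k => tres (B i k) (x k))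
    have hlami : lam i = tres (B i ks) (x ks) := le_antisymm (iInf_le _ ks) (le_iInf hks)
    rw [hlami] at hti
    set a := B i ks with ha'
    set b := x ks with hb'
    have htop : tres a b ≠ ⊤ := by
      intro h
      rw [h, EReal.top_add_of_ne_bot hc] at hti
      exact not_top_lt hti
    have ha : a ≠ ⊥ := fun h => htop (by rw [h, tres_bot])
    have hbt : b ≠ ⊤ := fun h => htop (by rw [h, tres_top])
    show B i k₀ ≤ ⨆ k, tres (x k) s + B i k
    by_cases hbb : b = ⊥
    · refine le_trans ?_ (le_iSup (fun k => tres (x k) s + B i k) ks)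
      rw [← hb', hbb, tres_bot, EReal.top_add_of_ne_bot (show B i ks ≠ ⊥ from ha)]
      exact le_top
    obtain ⟨r, hr⟩ := ereal_cases b hbb hbt
    by_cases hat : a = ⊤
    · refine le_trans ?_ (le_iSup (fun k => tres (x k) s + B i k) ks)
      have h1 : tres (x ks) s ≠ ⊥ := by rw [← hb', hr]; exact tres_coe_ne_bot r hsbot.ne'
      rw [show B i ks = ⊤ from ha' ▸ hat, EReal.add_top_of_ne_bot h1]
      exact le_top
    obtain ⟨a₀, ha₀⟩ := ereal_cases a ha hat
    by_cases hst : s = ⊤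
    · refine le_trans ?_ (le_iSup (fun k => tres (x k) s + B i k) ks)
      rw [← hb', hst, tres_top, EReal.top_add_of_ne_bot (show B i ks ≠ ⊥ from ha)]
      exact le_top
    obtain ⟨s₀, hs₀⟩ := ereal_cases s (by exact fun h => absurd (h ▸ hsbot) (lt_irrefl _)) hst
    by_cases hct : B i k₀ = ⊤
    · rw [ha₀, hr, tres_coe_coe] at hti
      rw [hct, EReal.coe_add_top] at hti
      exact absurd hti not_top_lt
    obtain ⟨c₀, hc₀⟩ := ereal_cases (B i k₀) hc hct
    refine le_trans ?_ (le_iSup (fun k => tres (x k) s + B i k) ks)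
    rw [← hb', ← ha', hr, hs₀, hc₀, tres_coe_coe, ha₀]
    rw [ha₀, hr, tres_coe_coe, hc₀, hs₀] at hti
    norm_cast at hti ⊢
    linarith
  have hH := H (unit k₀) (fun k => tres (x k) s) key
  rw [iSup_unit] at hH
  refine hH.trans (iSup_le fun k => ?_)
  rw [add_comm]
  exact add_tres_le _ _
/-- scaled unit vector -/
noncomputable def su {q : ℕ} (c : EReal) (k₀ : Fin q) : Fin q → EReal :=
  fun k => if k = k₀ then c else ⊥

lemma iSup_su {q : ℕ} (c : EReal) (k₀ : Fin q) (y : Fin q → EReal) :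
    (⨆ k, su c k₀ k + y k) = c + y k₀ := by
  refine le_antisymm (iSup_le fun k => ?_) ?_
  · by_cases h : k = k₀
    · subst h; simp [su]
    · simp [su, h]
  · have := le_iSup (fun k => su c k₀ k + y k) k₀
    simpa [su] using this

lemma mv_su {p q : ℕ} (M : Matrix (Fin p) (Fin q) EReal) (c : EReal) (k₀ : Fin q) :
    mv M (su c k₀) = fun i => c + M i k₀ := by
  funext i; exact iSup_su c k₀ (fun k => M i k)

/-- tropical matrix multiplication -/
noncomputable def tmul {p q r : ℕ} (P : Matrix (Fin p) (Fin q) EReal)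
    (M : Matrix (Fin q) (Fin r) EReal) : Matrix (Fin p) (Fin r) EReal :=
  Matrix.of fun l k => ⨆ i, P l i + M i k

lemma mv_comp {p q r : ℕ} (P : Matrix (Fin p) (Fin q) EReal)
    (M : Matrix (Fin q) (Fin r) EReal) (μ : Fin r → EReal) :
    mv P (mv M μ) = mv (tmul P M) μ := by
  funext l
  simp only [mv, tmul, Matrix.of_apply]
  have h1 : ∀ i, (⨆ k, μ k + M i k) + P l i = ⨆ k, (μ k + M i k) + P l i := fun i =>
    ereal_iSup_add _ _
  have h2 : ∀ k, μ k + ⨆ i, P l i + M i k = ⨆ i, μ k + (P l i + M i k) := fun k =>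
    ereal_add_iSup _ _
  simp only [h1, h2]
  rw [iSup_comm (f := fun i k => (μ k + M i k) + P l i)]
  exact iSup_congr fun k => iSup_congr fun i => by
    rw [add_assoc, add_comm (M i k) (P l i)]

lemma colSpace_sup {p q : ℕ} {M : Matrix (Fin p) (Fin q) EReal} {u v : Fin p → EReal}
    (hu : u ∈ colSpace M) (hv : v ∈ colSpace M) : u ⊔ v ∈ colSpace M := by
  obtain ⟨μ, rfl⟩ := mem_colSpace.mp hu
  obtain ⟨ν, rfl⟩ := mem_colSpace.mp hv
  exact mem_colSpace.mpr ⟨μ ⊔ ν, (mv_sup M μ ν).symm⟩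

/-- truncation of a vector -/
noncomputable def trunc {q : ℕ} (μ : Fin q → EReal) (m : ℕ) : Fin q → EReal :=
  fun k => if (k : ℕ) < m then μ k else ⊥
lemma forward_dir {n : ℕ} (A D B : Matrix (Fin n) (Fin n) EReal)
    (hR : rowSpace A = rowSpace D) (hC : colSpace D = colSpace B) :
    ∃ f g : (Fin n → EReal) → (Fin n → EReal),
      (∀ u ∈ colSpace A, f u ∈ colSpace B) ∧
      (∀ v ∈ colSpace B, g v ∈ colSpace A) ∧
      (∀ u ∈ colSpace A, g (f u) = u) ∧
      (∀ v ∈ colSpace B, f (g v) = v) ∧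
      (∀ u ∈ colSpace A, ∀ v ∈ colSpace A, f (u ⊔ v) = f u ⊔ f v) ∧
      (∀ u ∈ colSpace A, ∀ c : EReal, f (fun i => c + u i) = fun i => c + f u i) := by
  have hrowD : ∀ l, ∃ lam : Fin n → EReal, ∀ k, D l k = ⨆ i, lam i + A i k := by
    intro l
    have hmem : (fun k => D l k) ∈ rowSpace D :=
      ⟨unit l, fun k => (iSup_unit l (fun i => D i k)).symm⟩
    rw [← hR] at hmem
    exact hmem
  choose P hP using hrowD
  have hrowA : ∀ l, ∃ lam : Fin n → EReal, ∀ k, A l k = ⨆ i, lam i + D i k := by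
    intro l
    have hmem : (fun k => A l k) ∈ rowSpace A :=
      ⟨unit l, fun k => (iSup_unit l (fun i => A i k)).symm⟩
    rw [hR] at hmem
    exact hmem
  choose Q hQ using hrowA
  have hMP : tmul (Matrix.of P) A = D := by
    funext l k
    exact (hP l k).symm
  have hMQ : tmul (Matrix.of Q) D = A := by
    funext l k
    exact (hQ l k).symm
  have hPA : ∀ μ, mv (Matrix.of P) (mv A μ) = mv D μ := fun μ => by rw [mv_comp, hMP]
  have hQD : ∀ μ, mv (Matrix.of Q) (mv D μ) = mv A μ := fun μ => by rw [mv_comp, hMQ]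
  refine ⟨fun u => mv (Matrix.of P) u, fun v => mv (Matrix.of Q) v, ?_, ?_, ?_, ?_, ?_, ?_⟩
  · intro u hu
    obtain ⟨μ, rfl⟩ := mem_colSpace.mp hu
    show mv (Matrix.of P) (mv A μ) ∈ colSpace B
    rw [hPA, ← hC]
    exact mem_colSpace.mpr ⟨μ, rfl⟩
  · intro v hv
    rw [← hC] at hv
    obtain ⟨μ, rfl⟩ := mem_colSpace.mp hv
    show mv (Matrix.of Q) (mv D μ) ∈ colSpace A
    rw [hQD]
    exact mem_colSpace.mpr ⟨μ, rfl⟩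
  · intro u hu
    obtain ⟨μ, rfl⟩ := mem_colSpace.mp hu
    show mv (Matrix.of Q) (mv (Matrix.of P) (mv A μ)) = mv A μ
    rw [hPA, hQD]
  · intro v hv
    rw [← hC] at hv
    obtain ⟨μ, rfl⟩ := mem_colSpace.mp hv
    show mv (Matrix.of P) (mv (Matrix.of Q) (mv D μ)) = mv D μ
    rw [hQD, hPA]
  · intro u _ v _
    exact mv_sup (Matrix.of P) u v
  · intro u _ c
    exact mv_smul (Matrix.of P) c u
lemma backward_dir {n : ℕ} (hn : n ≠ 0) (A B : Matrix (Fin n) (Fin n) EReal)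
    (f g : (Fin n → EReal) → (Fin n → EReal))
    (h1 : ∀ u ∈ colSpace A, f u ∈ colSpace B)
    (h2 : ∀ v ∈ colSpace B, g v ∈ colSpace A)
    (h3 : ∀ u ∈ colSpace A, g (f u) = u)
    (h4 : ∀ v ∈ colSpace B, f (g v) = v)
    (h5 : ∀ u ∈ colSpace A, ∀ v ∈ colSpace A, f (u ⊔ v) = f u ⊔ f v)
    (h6 : ∀ u ∈ colSpace A, ∀ c : EReal, f (fun i => c + u i) = fun i => c + f u i) :
    ∃ D : Matrix (Fin n) (Fin n) EReal, rowSpace A = rowSpace D ∧ colSpace D = colSpace B := by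
  set D : Matrix (Fin n) (Fin n) EReal := Matrix.of fun i k => f (fun i' => A i' k) i with hD
  have hcol : ∀ k₀, (fun i => A i k₀) ∈ colSpace A := fun k₀ =>
    ⟨unit k₀, fun i => (iSup_unit k₀ (fun k => A i k)).symm⟩
  -- f maps scaled columns correctly
  have hsu : ∀ (c : EReal) (k₀ : Fin n), f (mv A (su c k₀)) = mv D (su c k₀) := by
    intro c k₀
    rw [mv_su A, mv_su D]
    exact h6 _ (hcol k₀) c
  -- main induction
  have claim : ∀ m (μ : Fin n → EReal),
      f (mv A (trunc μ (m+1))) = mv D (trunc μ (m+1)) := by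
    intro m
    induction m with
    | zero =>
      intro μ
      have h0 : (0:ℕ) < n := Nat.pos_of_ne_zero hn
      have htr : trunc μ 1 = su (μ ⟨0,h0⟩) ⟨0,h0⟩ := by
        funext k
        simp only [trunc, su]
        by_cases h : k = ⟨0,h0⟩
        · subst h; simp
        · have hne : ¬ (k:ℕ) < 1 := by
            intro hlt
            exact h (Fin.ext (show (k:ℕ) = 0 by omega))
          rw [if_neg hne, if_neg h]
      rw [htr, hsu]
    | succ m ih =>
      intro μ
      by_cases hm : m + 1 < n
      · have hdec : trunc μ (m+2) = trunc μ (m+1) ⊔ su (μ ⟨m+1,hm⟩) ⟨m+1,hm⟩ := by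
          funext k
          rw [Pi.sup_apply]
          simp only [trunc, su]
          rcases lt_trichotomy (k:ℕ) (m+1) with h | h | h
          · have hne : k ≠ ⟨m+1,hm⟩ := by
              intro he; rw [he] at h; simp at h
            rw [if_pos (by omega), if_pos h, if_neg hne, sup_bot_eq]
          · have he : k = ⟨m+1,hm⟩ := Fin.ext (show (k:ℕ) = m+1 by omega)
            rw [if_pos (by omega), if_neg (by omega), if_pos he, bot_sup_eq, he]
          · have hne : k ≠ ⟨m+1,hm⟩ := by
              intro he; rw [he] at h; simp at h
            rw [if_neg (by omega), if_neg (by omega), if_neg hne, bot_sup_eq]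
        have m1 : mv A (trunc μ (m+1)) ∈ colSpace A := mem_colSpace.mpr ⟨_, rfl⟩
        have m2 : mv A (su (μ ⟨m+1,hm⟩) ⟨m+1,hm⟩) ∈ colSpace A := mem_colSpace.mpr ⟨_, rfl⟩
        rw [hdec, mv_sup, mv_sup, h5 _ m1 _ m2, ih μ, hsu]
      · have htr : trunc μ (m+2) = trunc μ (m+1) := by
          funext k
          have hk := k.isLt
          simp only [trunc]
          rw [if_pos (by omega), if_pos (by omega)]
        rw [htr]
        exact ih μ
  have hfD : ∀ μ, mv D μ = f (mv A μ) := by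
    intro μ
    obtain ⟨m, hm⟩ : ∃ m, n = m + 1 :=
      ⟨n-1, (Nat.succ_pred_eq_of_pos (Nat.pos_of_ne_zero hn)).symm⟩
    have htr : trunc μ n = μ := funext fun k => if_pos k.isLt
    have := claim m μ
    rw [← hm, htr] at this
    exact this.symm
  -- column space equality
  have hCD : colSpace D = colSpace B := by
    ext v
    constructor
    · intro hv
      obtain ⟨μ, rfl⟩ := mem_colSpace.mp hv
      rw [hfD]
      exact h1 _ (mem_colSpace.mpr ⟨μ, rfl⟩)
    · intro hv
      obtain ⟨μ, hμ⟩ := mem_colSpace.mp (h2 v hv)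
      refine mem_colSpace.mpr ⟨μ, ?_⟩
      rw [hfD, ← hμ]
      exact (h4 v hv).symm
  -- monotonicity of f and g
  have hfmono : ∀ u ∈ colSpace A, ∀ u' ∈ colSpace A, u ≤ u' → f u ≤ f u' := by
    intro u hu u' hu' hle
    have : f u' = f u ⊔ f u' := by
      rw [← h5 u hu u' hu', sup_eq_right.mpr hle]
    rw [this]
    exact le_sup_left
  have hgmono : ∀ v ∈ colSpace B, ∀ v' ∈ colSpace B, v ≤ v' → g v ≤ g v' := by
    intro v hv v' hv' hle
    have hsupB : v ⊔ v' ∈ colSpace B := colSpace_sup hv hv'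
    have hsupA : g v ⊔ g v' ∈ colSpace A := colSpace_sup (h2 v hv) (h2 v' hv')
    have e1 : f (g (v ⊔ v')) = v ⊔ v' := h4 _ hsupB
    have e2 : f (g v ⊔ g v') = v ⊔ v' := by
      rw [h5 _ (h2 v hv) _ (h2 v' hv'), h4 v hv, h4 v' hv']
    have e3 : g (v ⊔ v') = g v ⊔ g v' := by
      have := congrArg g (e1.trans e2.symm)
      rwa [h3 _ (h2 _ hsupB), h3 _ hsupA] at this
    calc g v ≤ g v ⊔ g v' := le_sup_left
      _ = g (v ⊔ v') := e3.symm
      _ = g v' := by rw [sup_eq_right.mpr hle]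
  -- row space equality
  have hRA : rowSpace A = rowSpace D := by
    ext x
    constructor
    · intro hx
      obtain ⟨lam, rfl⟩ := mem_rowSpace.mp hx
      refine mem_rowSpace.mpr (represent D _ ?_)
      intro μ μ' hle
      rw [hfD, hfD] at hle
      have hA : mv A μ ≤ mv A μ' := by
        have := hgmono _ (h1 _ (mem_colSpace.mpr ⟨μ, rfl⟩))
          _ (h1 _ (mem_colSpace.mpr ⟨μ', rfl⟩)) hle
        rwa [h3 _ (mem_colSpace.mpr ⟨μ, rfl⟩), h3 _ (mem_colSpace.mpr ⟨μ', rfl⟩)] at this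
      calc (⨆ k, μ k + mv A.transpose lam k)
          = ⨆ i, lam i + mv A μ i := pair_swap A lam μ
        _ ≤ ⨆ i, lam i + mv A μ' i := pair_mono lam hA
        _ = ⨆ k, μ' k + mv A.transpose lam k := (pair_swap A lam μ').symm
    · intro hx
      obtain ⟨nu, rfl⟩ := mem_rowSpace.mp hx
      refine mem_rowSpace.mpr (represent A _ ?_)
      intro μ μ' hle
      have hDle : mv D μ ≤ mv D μ' := by
        rw [hfD, hfD]
        exact hfmono _ (mem_colSpace.mpr ⟨μ, rfl⟩) _ (mem_colSpace.mpr ⟨μ', rfl⟩) hle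
      calc (⨆ k, μ k + mv D.transpose nu k)
          = ⨆ i, nu i + mv D μ i := pair_swap D nu μ
        _ ≤ ⨆ i, nu i + mv D μ' i := pair_mono nu hDle
        _ = ⨆ k, μ' k + mv D.transpose nu k := (pair_swap D nu μ').symm
  exact ⟨D, hRA, hCD⟩
lemma colSpace_zero (M : Matrix (Fin 0) (Fin 0) EReal) : colSpace M = Set.univ :=
  Set.eq_univ_of_forall fun y => ⟨Fin.elim0, fun i => i.elim0⟩

end TropD

/-- Green's `𝒟` relation for `n × n` matrices over the completed tropical semiring:
`A 𝒟 B` iff their column spaces are isomorphic as semimodules. -/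
theorem stmt_4 (n : ℕ) (A B : Matrix (Fin n) (Fin n) EReal) :
    (∃ D : Matrix (Fin n) (Fin n) EReal, rowSpace A = rowSpace D ∧ colSpace D = colSpace B) ↔
    (∃ f g : (Fin n → EReal) → (Fin n → EReal),
      (∀ u ∈ colSpace A, f u ∈ colSpace B) ∧
      (∀ v ∈ colSpace B, g v ∈ colSpace A) ∧
      (∀ u ∈ colSpace A, g (f u) = u) ∧
      (∀ v ∈ colSpace B, f (g v) = v) ∧
      (∀ u ∈ colSpace A, ∀ v ∈ colSpace A, f (u ⊔ v) = f u ⊔ f v) ∧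
      (∀ u ∈ colSpace A, ∀ c : EReal, f (fun i => c + u i) = fun i => c + f u i)) := by
  constructor
  · rintro ⟨D, hR, hC⟩
    exact TropD.forward_dir A D B hR hC
  · rintro ⟨f, g, h1, h2, h3, h4, h5, h6⟩
    by_cases hn : n = 0
    · subst hn
      exact ⟨A, rfl, by rw [TropD.colSpace_zero A, TropD.colSpace_zero B]⟩
    · exact TropD.backward_dir hn A B f g h1 h2 h3 h4 h5 h6
end

section
/- (Inheritance of Green's 𝒟 relation from the completed tropical semiring to the tropical semiring.) Let n : ℕ and let A B : Matrix (Fin n) (Fin n) EReal be ⊤-free. Then the following are equivalent: (1) there exist ⊤-free matrices C, P, Q, P', Q' : Matrix (Fin n) (Fin n) EReal with A = P ⊙ C, C = Q ⊙ A, C = B ⊙ P', and B = C ⊙ Q' (i.e. A 𝒟 B within the semigroup of ⊤-free matrices); (2) there exist matrices C, P, Q, P', Q' : Matrix (Fin n) (Fin n) EReal (unrestricted) satisfying the same four equations (i.e. A 𝒟 B within the semigroup of all EReal matrices). -/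
/-- The tropical (max-plus) matrix product over `EReal`. -/
noncomputable def tropMul {l m n : ℕ} (A : Matrix (Fin l) (Fin m) EReal)
    (B : Matrix (Fin m) (Fin n) EReal) : Matrix (Fin l) (Fin n) EReal :=
  fun i j => ⨆ k, A i k + B k j

/-- A matrix over `EReal` is `⊤`-free if no entry equals `⊤`. -/
def TopFree {m n : ℕ} (A : Matrix (Fin m) (Fin n) EReal) : Prop :=
  ∀ i j, A i j ≠ ⊤

/-- Truncation: replace all `⊤` entries by `⊥`. -/
noncomputable def trunc {m n : ℕ} (M : Matrix (Fin m) (Fin n) EReal) :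
    Matrix (Fin m) (Fin n) EReal :=
  fun i j => if M i j = ⊤ then ⊥ else M i j

lemma trunc_topFree {m n : ℕ} (M : Matrix (Fin m) (Fin n) EReal) : TopFree (trunc M) := by
  intro i j
  by_cases h : M i j = ⊤ <;> simp [trunc, h]

lemma ereal_eq_bot_of_add_top {a : EReal} (h : a + ⊤ ≠ ⊤) : a = ⊥ := by
  by_contra hb
  exact h (EReal.add_top_of_ne_bot hb)

lemma ereal_eq_bot_of_top_add {a : EReal} (h : ⊤ + a ≠ ⊤) : a = ⊥ := by
  rw [add_comm] at h
  exact ereal_eq_bot_of_add_top h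

/-- Key pointwise lemma: truncating the left summand (and replacing the right
summand by anything agreeing with it off `⊤`) does not change a non-`⊤` sum. -/
lemma add_tr (y z : EReal) (hyz : y + z ≠ ⊤) (z' : EReal) (hz : z ≠ ⊤ → z' = z) :
    (if y = ⊤ then ⊥ else y) + z' = y + z := by
  by_cases hzt : z = ⊤
  · have hy : y = ⊥ := ereal_eq_bot_of_add_top (hzt ▸ hyz)
    subst hy
    simp
  · rw [hz hzt]
    by_cases hyt : y = ⊤
    · have hzb : z = ⊥ := ereal_eq_bot_of_top_add (hyt ▸ hyz)
      simp [hyt, hzb]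
    · simp [hyt]

lemma tr_add (y z : EReal) (hyz : z + y ≠ ⊤) (z' : EReal) (hz : z ≠ ⊤ → z' = z) :
    z' + (if y = ⊤ then ⊥ else y) = z + y := by
  rw [add_comm z' _, add_comm z y]
  exact add_tr y z (by rwa [add_comm y z]) z' hz

lemma fin_iSup_ne_top {m : ℕ} (f : Fin m → EReal) (h : ∀ k, f k ≠ ⊤) :
    (⨆ k, f k) ≠ ⊤ := by
  rcases Nat.eq_zero_or_pos m with hm | hm
  · subst hm
    rw [iSup_of_empty]
    exact bot_ne_top
  · have : Nonempty (Fin m) := ⟨⟨0, hm⟩⟩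
    obtain ⟨i, hi⟩ := Finite.exists_max f
    have : (⨆ k, f k) = f i := le_antisymm (iSup_le hi) (le_iSup f i)
    rw [this]
    exact h i

lemma topFree_tropMul {l m n : ℕ} {A : Matrix (Fin l) (Fin m) EReal}
    {B : Matrix (Fin m) (Fin n) EReal} (hA : TopFree A) (hB : TopFree B) :
    TopFree (tropMul A B) := by
  intro i j
  exact fin_iSup_ne_top _ fun k => (EReal.add_lt_top (hA i k) (hB k j)).ne

lemma term_le_tropMul {l m n : ℕ} (A : Matrix (Fin l) (Fin m) EReal)
    (B : Matrix (Fin m) (Fin n) EReal) (i k j) :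
    A i k + B k j ≤ tropMul A B i j :=
  le_iSup (fun k => A i k + B k j) k

/-- If `X = Y ⊙ Z` with `X` ⊤-free, we may truncate `Y` and replace `Z` by any
matrix agreeing with `Z` at the non-`⊤` entries of `Z`. -/
lemma left_trunc {l m n : ℕ} {X : Matrix (Fin l) (Fin n) EReal}
    {Y : Matrix (Fin l) (Fin m) EReal} {Z : Matrix (Fin m) (Fin n) EReal}
    (hX : TopFree X) (h : X = tropMul Y Z) (Z' : Matrix (Fin m) (Fin n) EReal)
    (hZ' : ∀ k j, Z k j ≠ ⊤ → Z' k j = Z k j) :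
    X = tropMul (trunc Y) Z' := by
  funext i j
  rw [h]
  show tropMul Y Z i j = ⨆ k, trunc Y i k + Z' k j
  refine (iSup_congr fun k => ?_).symm
  have hne : Y i k + Z k j ≠ ⊤ :=
    ne_top_of_le_ne_top (h ▸ hX i j) (term_le_tropMul Y Z i k j)
  exact add_tr (Y i k) (Z k j) hne (Z' k j) (hZ' k j)

/-- Mirror version: truncate `Z` and replace `Y`. -/
lemma right_trunc {l m n : ℕ} {X : Matrix (Fin l) (Fin n) EReal}
    {Y : Matrix (Fin l) (Fin m) EReal} {Z : Matrix (Fin m) (Fin n) EReal}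
    (hX : TopFree X) (h : X = tropMul Y Z) (Y' : Matrix (Fin l) (Fin m) EReal)
    (hY' : ∀ i k, Y i k ≠ ⊤ → Y' i k = Y i k) :
    X = tropMul Y' (trunc Z) := by
  funext i j
  rw [h]
  show tropMul Y Z i j = ⨆ k, Y' i k + trunc Z k j
  refine (iSup_congr fun k => ?_).symm
  have hne : Y i k + Z k j ≠ ⊤ :=
    ne_top_of_le_ne_top (h ▸ hX i j) (term_le_tropMul Y Z i k j)
  exact tr_add (Z k j) (Y i k) hne (Y' i k) (hY' i k)

/-- If `W = Y ⊙ Z`, then `(trunc Y) ⊙ Z` agrees with `W` at non-`⊤` entries of `W`. -/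
lemma agree_left {l m n : ℕ} {W : Matrix (Fin l) (Fin n) EReal}
    {Y : Matrix (Fin l) (Fin m) EReal} {Z : Matrix (Fin m) (Fin n) EReal}
    (h : W = tropMul Y Z) (i j) (hW : W i j ≠ ⊤) :
    tropMul (trunc Y) Z i j = W i j := by
  rw [h]
  refine iSup_congr fun k => ?_
  have hne : Y i k + Z k j ≠ ⊤ :=
    ne_top_of_le_ne_top (h ▸ hW) (term_le_tropMul Y Z i k j)
  exact add_tr (Y i k) (Z k j) hne (Z k j) fun _ => rfl

/-- If `W = Y ⊙ Z`, then `Y ⊙ (trunc Z)` agrees with `W` at non-`⊤` entries of `W`. -/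
lemma agree_right {l m n : ℕ} {W : Matrix (Fin l) (Fin n) EReal}
    {Y : Matrix (Fin l) (Fin m) EReal} {Z : Matrix (Fin m) (Fin n) EReal}
    (h : W = tropMul Y Z) (i j) (hW : W i j ≠ ⊤) :
    tropMul Y (trunc Z) i j = W i j := by
  rw [h]
  refine iSup_congr fun k => ?_
  have hne : Y i k + Z k j ≠ ⊤ :=
    ne_top_of_le_ne_top (h ▸ hW) (term_le_tropMul Y Z i k j)
  exact tr_add (Z k j) (Y i k) hne (Y i k) fun _ => rfl

lemma ereal_iSup_add {ι : Sort*} (f : ι → EReal) (c : EReal) :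
    (⨆ k, f k) + c = ⨆ k, f k + c := by
  induction c with
  | bot => simp
  | top =>
    by_cases hb : ∀ k, f k = ⊥
    · have h1 : (⨆ k, f k) = ⊥ := by simp [hb]
      rw [h1]
      simp [hb]
    · push_neg at hb
      obtain ⟨k₀, hk₀⟩ := hb
      have h1 : (⨆ k, f k) + ⊤ = ⊤ :=
        EReal.add_top_of_ne_bot fun h => hk₀ (le_bot_iff.mp (h ▸ le_iSup f k₀))
      have h2 : (⨆ k, f k + ⊤) = ⊤ :=
        top_le_iff.mp ((EReal.add_top_of_ne_bot hk₀).symm.le.trans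
          (le_iSup (fun k => f k + ⊤) k₀))
      rw [h1, h2]
  | coe x =>
    apply le_antisymm
    · refine (EReal.le_sub_iff_add_le (Or.inl (EReal.coe_ne_bot x))
        (Or.inl (EReal.coe_ne_top x))).mp (iSup_le fun k => ?_)
      exact (EReal.le_sub_iff_add_le (Or.inl (EReal.coe_ne_bot x))
        (Or.inl (EReal.coe_ne_top x))).mpr (le_iSup (fun k => f k + (x : EReal)) k)
    · exact iSup_le fun k => add_le_add_left (le_iSup f k) _

lemma ereal_add_iSup {ι : Sort*} (f : ι → EReal) (c : EReal) :
    c + (⨆ k, f k) = ⨆ k, c + f k := by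
  rw [add_comm]
  rw [ereal_iSup_add]
  exact iSup_congr fun k => add_comm _ _

lemma tropMul_assoc {l m n p : ℕ} (A : Matrix (Fin l) (Fin m) EReal)
    (B : Matrix (Fin m) (Fin n) EReal) (C : Matrix (Fin n) (Fin p) EReal) :
    tropMul (tropMul A B) C = tropMul A (tropMul B C) := by
  funext i j
  show (⨆ k, (⨆ s, A i s + B s k) + C k j) = ⨆ s, A i s + ⨆ k, B s k + C k j
  calc (⨆ k, (⨆ s, A i s + B s k) + C k j)
      = ⨆ k, ⨆ s, A i s + B s k + C k j := by
        refine iSup_congr fun k => ?_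
        rw [ereal_iSup_add]
    _ = ⨆ s, ⨆ k, A i s + B s k + C k j := iSup_comm
    _ = ⨆ s, A i s + ⨆ k, B s k + C k j := by
        refine iSup_congr fun s => ?_
        rw [ereal_add_iSup]
        exact iSup_congr fun k => add_assoc _ _ _

/-- Inheritance of Green's `𝒟` relation from the completed tropical semiring
to the tropical semiring. -/
theorem stmt_5 (n : ℕ) (A B : Matrix (Fin n) (Fin n) EReal)
    (hA : TopFree A) (hB : TopFree B) :
    (∃ C P Q P' Q' : Matrix (Fin n) (Fin n) EReal,
      TopFree C ∧ TopFree P ∧ TopFree Q ∧ TopFree P' ∧ TopFree Q' ∧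
      A = tropMul P C ∧ C = tropMul Q A ∧ C = tropMul B P' ∧ B = tropMul C Q') ↔
    (∃ C P Q P' Q' : Matrix (Fin n) (Fin n) EReal,
      A = tropMul P C ∧ C = tropMul Q A ∧ C = tropMul B P' ∧ B = tropMul C Q') := by
  constructor
  · rintro ⟨C, P, Q, P', Q', -, -, -, -, -, h1, h2, h3, h4⟩
    exact ⟨C, P, Q, P', Q', h1, h2, h3, h4⟩
  · rintro ⟨C, P, Q, P', Q', h1, h2, h3, h4⟩
    -- The new middle matrix
    set C₁ : Matrix (Fin n) (Fin n) EReal := tropMul (trunc Q) A with hC₁def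
    have hC₁free : TopFree C₁ := topFree_tropMul (trunc_topFree Q) hA
    -- C₁ agrees with C at non-⊤ entries of C
    have hagree : ∀ i j, C i j ≠ ⊤ → C₁ i j = C i j := fun i j h => agree_left h2 i j h
    -- A = trunc P ⊙ C₁
    have fact2 : A = tropMul (trunc P) C₁ := left_trunc hA h1 C₁ hagree
    -- B = C₁ ⊙ trunc Q'
    have fact3 : B = tropMul C₁ (trunc Q') := right_trunc hB h4 C₁ hagree
    -- A = (A ⊙ Q') ⊙ P'  (in the completed semiring)
    have hPB : tropMul P B = tropMul A Q' := by
      rw [h4, ← tropMul_assoc, ← h1]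
    have hD : A = tropMul (tropMul A Q') P' := by
      rw [← hPB, tropMul_assoc, ← h3, ← h1]
    -- truncate: A = (A ⊙ trunc Q') ⊙ trunc P'
    have hDagree : ∀ i k, tropMul A Q' i k ≠ ⊤ →
        tropMul A (trunc Q') i k = tropMul A Q' i k :=
      fun i k h => agree_right rfl i k h
    have fact4 : A = tropMul (tropMul A (trunc Q')) (trunc P') :=
      right_trunc hA hD (tropMul A (trunc Q')) hDagree
    -- C₁ = B ⊙ trunc P'
    have fact5 : C₁ = tropMul B (trunc P') := by
      calc C₁ = tropMul (trunc Q) A := rfl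
        _ = tropMul (trunc Q) (tropMul (tropMul A (trunc Q')) (trunc P')) := by
            rw [← fact4]
        _ = tropMul (tropMul (trunc Q) (tropMul A (trunc Q'))) (trunc P') :=
            (tropMul_assoc _ _ _).symm
        _ = tropMul (tropMul (tropMul (trunc Q) A) (trunc Q')) (trunc P') :=
            congrArg (fun M => tropMul M (trunc P')) (tropMul_assoc _ _ _).symm
        _ = tropMul B (trunc P') := by rw [← hC₁def, ← fact3]
    exact ⟨C₁, trunc P, trunc Q, trunc P', trunc Q', hC₁free, trunc_topFree P,
      trunc_topFree Q, trunc_topFree P', trunc_topFree Q', fact2, rfl, fact5, fact3⟩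
end

section
/- Let n : ℕ and let A B : Matrix (Fin n) (Fin n) EReal be finite (all entries real). Then there exists a ⊤-free matrix P : Matrix (Fin n) (Fin n) EReal with A = B ⊙ P if and only if there exists a finite matrix P : Matrix (Fin n) (Fin n) EReal (all entries real) with A = B ⊙ P. (That is, for matrices with real entries, A ≤_ℛ B over the tropical semiring T = ℝ ∪ {-∞} iff A ≤_ℛ B over the finitary tropical semiring ℝ.) -/
/-- A matrix over `EReal` is finite if all its entries are real. -/
def MatFinite {m n : ℕ} (A : Matrix (Fin m) (Fin n) EReal) : Prop :=
  ∀ i j, ∃ r : ℝ, A i j = (r : EReal)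

/-- For matrices with all entries real, `A ≤_ℛ B` over the tropical semiring
`ℝ ∪ {-∞}` iff `A ≤_ℛ B` over the finitary tropical semiring `ℝ`. -/
theorem stmt_7 (n : ℕ) (A B : Matrix (Fin n) (Fin n) EReal)
    (hA : MatFinite A) (hB : MatFinite B) :
    (∃ P : Matrix (Fin n) (Fin n) EReal, TopFree P ∧ A = tropMul B P) ↔
    (∃ P : Matrix (Fin n) (Fin n) EReal, MatFinite P ∧ A = tropMul B P) := by
  constructor
  · rintro ⟨P, hP, hAP⟩
    rcases Nat.eq_zero_or_pos n with hn | hn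
    · subst hn
      exact ⟨0, fun i => i.elim0, funext fun i => i.elim0⟩
    · -- choose real representatives
      choose a ha using hA
      choose b hb using hB
      haveI : Nonempty (Fin n) := ⟨⟨0, hn⟩⟩
      -- lower bound
      set c : ℝ := Finset.univ.inf' (by simp) (fun p : Fin n × Fin n × Fin n => a p.1 p.2.1 - b p.1 p.2.2) with hc
      have hcle : ∀ i j k, c ≤ a i j - b i k := by
        intro i j k
        exact Finset.inf'_le _ (Finset.mem_univ (i, j, k))
      -- each term is ≤ A i j
      have hterm : ∀ i j k, B i k + P k j ≤ A i j := by
        intro i j k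
        calc B i k + P k j ≤ ⨆ k, B i k + P k j := le_iSup (fun k => B i k + P k j) k
          _ = A i j := by rw [hAP]; rfl
      -- the modified matrix
      set P' : Matrix (Fin n) (Fin n) EReal :=
        fun k j => if P k j = ⊥ then (c : EReal) else P k j with hP'
      refine ⟨P', ?_, ?_⟩
      · intro k j
        by_cases h : P k j = ⊥
        · exact ⟨c, by simp [hP', h]⟩
        · refine ⟨(P k j).toReal, ?_⟩
          rw [hP']
          simp only [if_neg h]
          exact (EReal.coe_toReal (hP k j) h).symm
      · funext i j
        unfold tropMul
        apply le_antisymm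
        · -- A i j = sup ≤ sup over P'
          rw [hAP]
          refine iSup_mono fun k => ?_
          apply add_le_add (le_refl _)
          rw [hP']
          by_cases h : P k j = ⊥
          · simp [h]
          · simp [h]
        · refine iSup_le fun k => ?_
          by_cases h : P k j = ⊥
          · have : B i k + P' k j = ((b i k + c : ℝ) : EReal) := by
              simp [hP', h, hb i k, ← EReal.coe_add]
            rw [this, ha i j]
            exact_mod_cast (by linarith [hcle i j k] : b i k + c ≤ a i j)
          · have : B i k + P' k j = B i k + P k j := by simp [hP', h]
            rw [this]
            exact hterm i j k
  · rintro ⟨P, hP, hAP⟩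
    refine ⟨P, fun i j => ?_, hAP⟩
    obtain ⟨r, hr⟩ := hP i j
    simp [hr]
end

section
/- Let n : ℕ and let A B : Matrix (Fin n) (Fin n) EReal be ⊤-free. Then there exists a matrix P : Matrix (Fin n) (Fin n) EReal with A = B ⊙ P if and only if there exists a ⊤-free matrix P : Matrix (Fin n) (Fin n) EReal with A = B ⊙ P. (That is, for ⊤-free matrices, A ≤_ℛ B over the completed tropical semiring iff A ≤_ℛ B over the tropical semiring T = ℝ ∪ {-∞}.) -/
/-- For `⊤`-free matrices, `A ≤_ℛ B` over the completed tropical semiring iff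
`A ≤_ℛ B` over the tropical semiring `ℝ ∪ {-∞}`. -/
theorem stmt_8 (n : ℕ) (A B : Matrix (Fin n) (Fin n) EReal)
    (hA : TopFree A) (hB : TopFree B) :
    (∃ P : Matrix (Fin n) (Fin n) EReal, A = tropMul B P) ↔
    (∃ P : Matrix (Fin n) (Fin n) EReal, TopFree P ∧ A = tropMul B P) := by
  constructor
  · rintro ⟨P, hP⟩
    refine ⟨fun k j => if P k j = ⊤ then ⊥ else P k j, fun k j => by
      by_cases h : P k j = ⊤ <;> simp [h], ?_⟩
    rw [hP]
    funext i j
    simp only [tropMul]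
    congr 1; funext k
    by_cases h : P k j = ⊤
    · simp only [h, if_pos]
      have hle : B i k + ⊤ ≤ A i j := by
        rw [hP]
        conv_lhs => rw [← h]
        exact le_iSup (fun k => B i k + P k j) k
      have hb : B i k = ⊥ := by
        by_contra hb
        exact hA i j (top_le_iff.mp (EReal.add_top_of_ne_bot hb ▸ hle))
      simp [hb]
    · simp [h]
  · rintro ⟨P, _, hP⟩
    exact ⟨P, hP⟩
end

section
/- Let n : ℕ with 1 ≤ n and let X : Matrix (Fin n) (Fin n) EReal be ⊤-free. Suppose there exist a finite matrix Y (all entries real) and ⊤-free matrices P, Q with X = Y ⊙ P and Y = X ⊙ Q (X is ℛ-related to a finite matrix within the ⊤-free matrices), and there exist a finite matrix Y' and ⊤-free matrices P', Q' with X = P' ⊙ Y' and Y' = Q' ⊙ X (X is ℒ-related to a finite matrix within the ⊤-free matrices). Then every entry of X is real. -/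
/-- A `⊤`-free matrix which is both `ℛ`-related and `ℒ`-related (within the
`⊤`-free matrices) to finite matrices is itself finite. -/
theorem stmt_9 (n : ℕ) (hn : 1 ≤ n) (X : Matrix (Fin n) (Fin n) EReal)
    (hX : TopFree X)
    (hR : ∃ Y P Q : Matrix (Fin n) (Fin n) EReal,
      MatFinite Y ∧ TopFree P ∧ TopFree Q ∧ X = tropMul Y P ∧ Y = tropMul X Q)
    (hL : ∃ Y' P' Q' : Matrix (Fin n) (Fin n) EReal,
      MatFinite Y' ∧ TopFree P' ∧ TopFree Q' ∧ X = tropMul P' Y' ∧ Y' = tropMul Q' X) :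
    MatFinite X := by
  obtain ⟨Y, P, Q, hYfin, hP, hQ, hXYP, hYXQ⟩ := hR
  obtain ⟨Y', P', Q', hY'fin, hP', hQ', hXP'Y', hY'Q'X⟩ := hL
  intro i j
  refine ⟨(X i j).toReal, (EReal.coe_toReal (hX i j) ?_).symm⟩
  intro hbot
  -- from X = Y ⊙ P with X i j = ⊥ and Y finite: column j of P is all ⊥
  have hPcol : ∀ l, P l j = ⊥ := by
    intro l
    have h1 : tropMul Y P i j = ⊥ := by rw [← hXYP]; exact hbot
    simp only [tropMul, iSup_eq_bot] at h1
    have h2 : Y i l + P l j = ⊥ := h1 l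
    obtain ⟨r, hr⟩ := hYfin i l
    rw [hr] at h2
    rcases EReal.add_eq_bot_iff.mp h2 with h | h
    · exact absurd h (EReal.coe_ne_bot r)
    · exact h
  -- hence column j of X is all ⊥
  have hXcol : ∀ k, X k j = ⊥ := by
    intro k
    rw [congrFun (congrFun hXYP k) j]
    simp only [tropMul, iSup_eq_bot]
    intro l
    rw [hPcol l, EReal.add_bot]
  -- but Y' a j is real and equals ⨆ k, Q' a k + X k j = ⊥
  set a : Fin n := ⟨0, hn⟩
  obtain ⟨r, hr⟩ := hY'fin a j
  have : Y' a j = ⊥ := by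
    rw [congrFun (congrFun hY'Q'X a) j]
    simp only [tropMul, iSup_eq_bot]
    intro k
    rw [hXcol k, EReal.add_bot]
  rw [hr] at this
  exact EReal.coe_ne_bot r this
end

section
/- Let n : ℕ with 1 ≤ n and let X : Matrix (Fin n) (Fin n) EReal. Suppose there exist a ⊤-free matrix Y and matrices P, Q over EReal with X = Y ⊙ P and Y = X ⊙ Q (X is ℛ-related to a ⊤-free matrix), and there exist a ⊤-free matrix Y' and matrices P', Q' over EReal with X = P' ⊙ Y' and Y' = Q' ⊙ X (X is ℒ-related to a ⊤-free matrix). Then X is ⊤-free. -/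
/-- A finite nonempty sup equal to `⊤` is attained. -/
lemma iSup_eq_top_exists {n : ℕ} [Nonempty (Fin n)] (f : Fin n → EReal)
    (h : ⨆ k, f k = ⊤) : ∃ k, f k = ⊤ := by
  obtain ⟨k, hk⟩ := Finite.exists_max f
  exact ⟨k, top_le_iff.mp (h ▸ iSup_le hk)⟩

/-- A matrix over `EReal` which is both `ℛ`-related and `ℒ`-related to
`⊤`-free matrices is itself `⊤`-free. -/
theorem stmt_10 (n : ℕ) (hn : 1 ≤ n) (X : Matrix (Fin n) (Fin n) EReal)
    (hR : ∃ Y P Q : Matrix (Fin n) (Fin n) EReal,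
      TopFree Y ∧ X = tropMul Y P ∧ Y = tropMul X Q)
    (hL : ∃ Y' P' Q' : Matrix (Fin n) (Fin n) EReal,
      TopFree Y' ∧ X = tropMul P' Y' ∧ Y' = tropMul Q' X) :
    TopFree X := by
  obtain ⟨Y, P, Q, hY, hXYP, hYXQ⟩ := hR
  obtain ⟨Y', P', Q', hY', hXPY', hY'QX⟩ := hL
  have : Nonempty (Fin n) := ⟨⟨0, hn⟩⟩
  intro i j hX
  -- Step 1: find k with Y i k + P k j = ⊤
  have hXij : (⨆ k, Y i k + P k j) = ⊤ := by
    have := congrFun (congrFun hXYP i) j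
    rw [hX] at this; exact this.symm
  obtain ⟨k, hk⟩ := iSup_eq_top_exists _ hXij
  have hYik_ne_bot : Y i k ≠ ⊥ := by
    intro h; rw [h, EReal.bot_add] at hk; exact absurd hk bot_ne_top
  have hPkj : P k j = ⊤ := by
    by_contra h
    exact absurd hk (EReal.add_lt_top (hY i k) h).ne
  -- Step 2: find p with X i p ≠ ⊥ and Q p k ≠ ⊥
  have hYik : Y i k = ⨆ p, X i p + Q p k := congrFun (congrFun hYXQ i) k
  have hp : ∃ p, X i p + Q p k ≠ ⊥ := by
    by_contra h
    push_neg at h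
    exact hYik_ne_bot (hYik.trans (iSup_eq_bot.mpr h))
  obtain ⟨p, hp⟩ := hp
  have hXip_ne_bot : X i p ≠ ⊥ := fun h => hp (by rw [h, EReal.bot_add])
  have hQpk_ne_bot : Q p k ≠ ⊥ := fun h => hp (by rw [h, EReal.add_bot])
  -- Step 3: every a with X a p ≠ ⊥ has X a j = ⊤
  have hcol : ∀ a, X a p ≠ ⊥ → X a j = ⊤ := by
    intro a ha
    have hYak_ne_bot : Y a k ≠ ⊥ := by
      intro h
      have hle : X a p + Q p k ≤ Y a k := by
        rw [congrFun (congrFun hYXQ a) k]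
        exact le_iSup (fun m => X a m + Q m k) p
      rw [h, le_bot_iff, EReal.add_eq_bot_iff] at hle
      exact hle.elim ha hQpk_ne_bot
    have hle : Y a k + P k j ≤ X a j := by
      rw [congrFun (congrFun hXYP a) j]
      exact le_iSup (fun k' => Y a k' + P k' j) k
    rw [hPkj, EReal.add_top_of_ne_bot hYak_ne_bot, top_le_iff] at hle
    exact hle
  -- Step 4: since Y' is top-free, Q' c a = ⊥ whenever X a j = ⊤
  have hQ'bot : ∀ c a, X a j = ⊤ → Q' c a = ⊥ := by
    intro c a haj
    by_contra h
    apply hY' c j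
    have hle : Q' c a + X a j ≤ Y' c j := by
      rw [congrFun (congrFun hY'QX c) j]
      exact le_iSup (fun m => Q' c m + X m j) a
    rw [haj, EReal.add_top_of_ne_bot h, top_le_iff] at hle
    exact hle
  -- Step 5: column p of Y' is all ⊥
  have hY'p : ∀ c, Y' c p = ⊥ := by
    intro c
    rw [congrFun (congrFun hY'QX c) p]
    apply iSup_eq_bot.mpr
    intro a
    by_cases ha : X a p = ⊥
    · rw [ha, EReal.add_bot]
    · rw [hQ'bot c a (hcol a ha), EReal.bot_add]
  -- Step 6: then X i p = ⊥, contradiction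
  apply hXip_ne_bot
  rw [congrFun (congrFun hXPY' i) p]
  apply iSup_eq_bot.mpr
  intro c
  rw [hY'p c, EReal.add_bot]
end

section
/- Let m n : ℕ, let B : Matrix (Fin m) (Fin n) EReal, and let z : Fin n → EReal be a row vector with z ∉ R(B). Then there exist column vectors x, y : Fin n → EReal such that B ⊙ x = B ⊙ y (i.e. ⨆ j, B i j + x j = ⨆ j, B i j + y j for every i) but ⨆ j, z j + x j ≠ ⨆ j, z j + y j. -/
/-- Tropical residuation: the largest `a` with `a + b ≤ t`. -/
noncomputable def eres (b t : EReal) : EReal := sSup {a | a + b ≤ t}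

lemma eres_spec (b t : EReal) : eres b t + b ≤ t := by
  apply EReal.add_le_of_forall_lt
  intro a' ha' b' hb'
  obtain ⟨a, (ha : a + b ≤ t), haa⟩ := lt_sSup_iff.1 ha'
  exact le_trans (add_le_add haa.le hb'.le) ha

lemma le_eres {a b t : EReal} : a ≤ eres b t ↔ a + b ≤ t :=
  ⟨fun h => le_trans (add_le_add_left h b) (eres_spec b t), fun h => le_sSup h⟩

lemma eres_mono {b t t' : EReal} (h : t ≤ t') : eres b t ≤ eres b t' :=
  sSup_le_sSup fun _a ha => le_trans ha h

/-- If a row vector `z` is not in the row space of `B`, then there are column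
vectors `x, y` with `B ⊙ x = B ⊙ y` but `z ⊙ x ≠ z ⊙ y`. -/
theorem stmt_11 (m n : ℕ) (B : Matrix (Fin m) (Fin n) EReal)
    (z : Fin n → EReal) (hz : z ∉ rowSpace B) :
    ∃ x y : Fin n → EReal,
      (∀ i, (⨆ j, B i j + x j) = ⨆ j, B i j + y j) ∧
      (⨆ j, z j + x j) ≠ ⨆ j, z j + y j := by
  classical
  set lam : Fin m → EReal := fun i => ⨅ k, eres (B i k) (z k) with hlam
  have hlow : ∀ i j, lam i + B i j ≤ z j := fun i j =>
    le_eres.1 (iInf_le (fun k => eres (B i k) (z k)) j)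
  have hle : ∀ j, (⨆ i, lam i + B i j) ≤ z j := fun j => iSup_le fun i => hlow i j
  obtain ⟨j0, hj0⟩ : ∃ j0, (⨆ i, lam i + B i j0) < z j0 := by
    by_contra h
    push_neg at h
    exact hz ⟨lam, fun j => le_antisymm (h j) (hle j)⟩
  set Z := z j0 with hZ
  have hZbot : (⊥ : EReal) < Z := lt_of_le_of_lt bot_le hj0
  have key : ∀ i : Fin m, ∃ c : EReal, c < Z ∧ B i j0 ≤ ⨆ k, B i k + eres (z k) c := by
    intro i
    by_cases hd : B i j0 = ⊥
    · exact ⟨⊥, hZbot, by rw [hd]; exact bot_le⟩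
    have : Nonempty (Fin n) := ⟨j0⟩
    obtain ⟨k0, hk0⟩ := Finite.exists_min (fun k => eres (B i k) (z k))
    have hlami : lam i = eres (B i k0) (z k0) :=
      le_antisymm (iInf_le _ k0) (le_iInf hk0)
    have hri : eres (B i k0) (z k0) + B i j0 < Z := by
      rw [← hlami]
      exact lt_of_le_of_lt (le_iSup (fun i => lam i + B i j0) i) hj0
    have hrtop : eres (B i k0) (z k0) ≠ ⊤ := by
      intro h
      rw [h, EReal.top_add_of_ne_bot hd] at hri
      exact not_top_lt hri
    have hbbot : B i k0 ≠ ⊥ := by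
      intro h
      exact hrtop (top_le_iff.1 (le_eres.2 (by rw [h, EReal.add_bot]; exact bot_le)))
    have httop : z k0 ≠ ⊤ := by
      intro h
      exact hrtop (top_le_iff.1 (le_eres.2 (by rw [h]; exact le_top)))
    by_cases htbot : z k0 = ⊥
    · refine ⟨⊥, hZbot, le_trans ?_ (le_iSup (fun k => B i k + eres (z k) ⊥) k0)⟩
      have h1 : eres (z k0) ⊥ = ⊤ :=
        top_le_iff.1 (le_eres.2 (by rw [htbot, EReal.add_bot]))
      rw [h1, EReal.add_top_of_ne_bot hbbot]
      exact le_top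
    obtain ⟨t', ht'⟩ : ∃ t' : ℝ, z k0 = (t' : EReal) :=
      ⟨(z k0).toReal, (EReal.coe_toReal httop htbot).symm⟩
    by_cases hbtop : B i k0 = ⊤
    · obtain ⟨c, _, hc2⟩ := EReal.exists_between_coe_real hZbot
      refine ⟨(c : EReal), hc2, le_trans ?_ (le_iSup (fun k => B i k + eres (z k) (c : EReal)) k0)⟩
      have h1 : ((c - t' : ℝ) : EReal) ≤ eres (z k0) (c : EReal) := by
        apply le_eres.2
        rw [ht', ← EReal.coe_add]
        norm_num
      have hne : eres (z k0) (c : EReal) ≠ ⊥ := fun h =>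
        EReal.coe_ne_bot _ (le_bot_iff.1 (h ▸ h1))
      rw [hbtop, EReal.top_add_of_ne_bot hne]
      exact le_top
    obtain ⟨b', hb'⟩ : ∃ b' : ℝ, B i k0 = (b' : EReal) :=
      ⟨(B i k0).toReal, (EReal.coe_toReal hbtop hbbot).symm⟩
    have hr1 : ((t' - b' : ℝ) : EReal) ≤ eres (B i k0) (z k0) := by
      apply le_eres.2
      rw [hb', ht', ← EReal.coe_add]
      norm_num
    have hrbot : eres (B i k0) (z k0) ≠ ⊥ := fun h =>
      EReal.coe_ne_bot _ (le_bot_iff.1 (h ▸ hr1))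
    obtain ⟨r', hr'⟩ : ∃ r' : ℝ, eres (B i k0) (z k0) = (r' : EReal) :=
      ⟨(eres (B i k0) (z k0)).toReal, (EReal.coe_toReal hrtop hrbot).symm⟩
    have hr2 : r' + b' ≤ t' := by
      have h2 := eres_spec (B i k0) (z k0)
      rw [hr', hb', ht', ← EReal.coe_add] at h2
      exact_mod_cast h2
    have hr3 : t' - b' ≤ r' := by
      rw [hr'] at hr1
      exact_mod_cast hr1
    have hdtop : B i j0 ≠ ⊤ := by
      intro h
      rw [hr', h, EReal.add_top_of_ne_bot (EReal.coe_ne_bot r')] at hri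
      exact not_top_lt hri
    obtain ⟨d', hd'⟩ : ∃ d' : ℝ, B i j0 = (d' : EReal) :=
      ⟨(B i j0).toReal, (EReal.coe_toReal hdtop hd).symm⟩
    have hcZ : ((r' + d' : ℝ) : EReal) < Z := by
      rw [EReal.coe_add, ← hr', ← hd']
      exact hri
    refine ⟨((r' + d' : ℝ) : EReal), hcZ,
      le_trans ?_ (le_iSup (fun k => B i k + eres (z k) ((r' + d' : ℝ) : EReal)) k0)⟩
    have h1 : ((r' + d' - t' : ℝ) : EReal) ≤ eres (z k0) ((r' + d' : ℝ) : EReal) := by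
      apply le_eres.2
      rw [ht', ← EReal.coe_add]
      norm_num
    rw [hd', hb']
    refine le_trans ?_ (add_le_add_right h1 (b' : EReal))
    rw [← EReal.coe_add]
    exact EReal.coe_le_coe_iff.2 (by linarith)
  obtain ⟨c, hcZ, hc⟩ : ∃ c, c < Z ∧ ∀ i, B i j0 ≤ ⨆ k, B i k + eres (z k) c := by
    choose co hlt hco using key
    rcases isEmpty_or_nonempty (Fin m) with h | h
    · exact ⟨⊥, hZbot, fun i => (h.false i).elim⟩
    · obtain ⟨i0, hi0⟩ := Finite.exists_max co
      refine ⟨co i0, hlt i0, fun i => le_trans (hco i) (iSup_mono fun k => ?_)⟩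
      exact add_le_add_right (eres_mono (hi0 i)) _
  set x : Fin n → EReal := fun k => eres (z k) c with hx
  set v : Fin m → EReal := fun i => ⨆ k, B i k + x k with hv
  set y : Fin n → EReal := fun k => ⨅ i, eres (B i k) (v i) with hy
  refine ⟨x, y, ?_, ?_⟩
  · intro i
    apply le_antisymm
    · apply iSup_mono
      intro k
      apply add_le_add_right
      apply le_iInf
      intro i'
      apply le_eres.2
      rw [add_comm]
      exact le_iSup (fun k => B i' k + x k) k
    · apply iSup_le
      intro k
      have : y k ≤ eres (B i k) (v i) := iInf_le _ i
      have h2 := le_eres.1 this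
      rw [add_comm] at h2
      exact h2.trans (le_refl (v i))
  · have h1 : (⨆ j, z j + x j) ≤ c := by
      apply iSup_le
      intro k
      rw [add_comm]
      exact le_eres.1 (le_refl (x k))
    have h2 : Z ≤ ⨆ j, z j + y j := by
      have hy0 : (0 : EReal) ≤ y j0 := by
        apply le_iInf
        intro i
        apply le_eres.2
        rw [zero_add]
        exact hc i
      calc Z = z j0 + 0 := (add_zero _).symm
        _ ≤ z j0 + y j0 := add_le_add_right hy0 _
        _ ≤ ⨆ j, z j + y j := le_iSup (fun j => z j + y j) j0
    intro h
    rw [h] at h1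
    exact absurd (h2.trans h1) (not_le.2 hcZ)
end

section
/- Let m n : ℕ and A B : Matrix (Fin m) (Fin n) EReal. Then R(A) ⊆ R(B) if and only if there exists a map f : (Fin m → EReal) → (Fin m → EReal) such that: f (fun i => B i j) = fun i => A i j for every j (f sends the j-th column of B to the j-th column of A); f u ∈ C(A) for every u ∈ C(B); f (u ⊔ v) = f u ⊔ f v for all u, v ∈ C(B); and f (fun i => c + u i) = fun i => c + f u i for all u ∈ C(B) and c : EReal (i.e. there is a linear morphism from C(B) to C(A) taking the columns of B to the corresponding columns of A). -/
namespace StmtAux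


lemma sup_add (p q r : EReal) : (p ⊔ q) + r = (p + r) ⊔ (q + r) := by
  rcases le_total p q with h | h
  · rw [sup_eq_right.2 h, sup_eq_right.2 (add_le_add_left h r)]
  · rw [sup_eq_left.2 h, sup_eq_left.2 (add_le_add_left h r)]

lemma add_iSup_fin {N : ℕ} (a : EReal) (f : Fin N → EReal) :
    a + ⨆ i, f i = ⨆ i, a + f i := by
  rcases Nat.eq_zero_or_pos N with h | h
  · subst h
    rw [iSup_of_empty, iSup_of_empty, EReal.add_bot]
  · have : Nonempty (Fin N) := ⟨⟨0, h⟩⟩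
    obtain ⟨i0, hi0⟩ := Finite.exists_max f
    have h1 : (⨆ i, f i) = f i0 := le_antisymm (iSup_le hi0) (le_iSup f i0)
    have h2 : (⨆ i, a + f i) = a + f i0 :=
      le_antisymm (iSup_le fun i => add_le_add_right (hi0 i) a)
        (le_iSup (fun i => a + f i) i0)
    rw [h1, h2]

lemma iSup_delta {N : ℕ} (c : EReal) (j0 : Fin N) (M : Fin N → EReal) :
    (⨆ j, (if j = j0 then c else ⊥) + M j) = c + M j0 := by
  apply le_antisymm
  · refine iSup_le fun j => ?_
    by_cases h : j = j0
    · subst h; simp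
    · simp [h]
  · have := le_iSup (fun j => (if j = j0 then c else ⊥) + M j) j0
    simpa using this

lemma iSup_ite_mem {N : ℕ} (s : Finset (Fin N)) (mu : Fin N → EReal) (M : Fin N → EReal) :
    (⨆ j, (if j ∈ s then mu j else ⊥) + M j) = ⨆ j ∈ s, (mu j + M j) := by
  apply le_antisymm
  · refine iSup_le fun j => ?_
    by_cases h : j ∈ s
    · simp only [if_pos h]
      exact le_iSup₂ (f := fun j _ => mu j + M j) j h
    · simp [h]
  · refine iSup₂_le fun j hj => ?_
    have := le_iSup (fun j => (if j ∈ s then mu j else ⊥) + M j) j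
    simpa [hj] using this



/-- Tropical residuation on `EReal`: the largest `c` with `c + b ≤ x`. -/
noncomputable def esub (x b : EReal) : EReal :=
  if b = ⊥ then ⊤ else if b = ⊤ then (if x = ⊤ then ⊤ else ⊥) else x - b

lemma esub_add_le (x b : EReal) : esub x b + b ≤ x := by
  unfold esub
  split_ifs with h1 h2 h3
  · simp [h1]
  · simp [h2, h3]
  · simp [h2]
  · induction b using EReal.rec with
    | bot => exact absurd rfl h1
    | top => exact absurd rfl h2
    | coe b =>
      induction x using EReal.rec with
      | bot => simp
      | top => exact le_top
      | coe x =>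
        rw [← EReal.coe_sub, ← EReal.coe_add]
        exact_mod_cast le_of_eq (by ring)

lemma esub_eq_bot {x b : EReal} (h : esub x b = ⊥) :
    (x = ⊥ ∧ b ≠ ⊥) ∨ (b = ⊤ ∧ x ≠ ⊤) := by
  unfold esub at h
  split_ifs at h with h1 h2 h3
  · exact absurd h (by simp)
  · exact absurd h (by simp)
  · right; exact ⟨h2, h3⟩
  · induction b using EReal.rec with
    | bot => exact absurd rfl h1
    | top => exact absurd rfl h2
    | coe b =>
      induction x using EReal.rec with
      | bot => exact Or.inl ⟨rfl, h1⟩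
      | top => rw [EReal.top_sub_coe] at h; exact absurd h (by simp)
      | coe x => rw [← EReal.coe_sub] at h; exact absurd h (EReal.coe_ne_bot _)

lemma esub_arith (r : ℝ) (X b b0 : EReal) (h : esub X b + b0 ≤ (r : EReal)) :
    b0 ≤ esub (r : EReal) X + b := by
  have topcase : ∀ z : EReal, (⊤ : EReal) + b0 ≤ (r : EReal) → b0 ≤ z := by
    intro z hz
    rcases eq_or_ne b0 ⊥ with hb0 | hb0
    · rw [hb0]; exact bot_le
    · rw [EReal.top_add_of_ne_bot hb0] at hz
      exact absurd hz (EReal.coe_lt_top r).not_ge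
  induction b using EReal.rec with
  | bot =>
    refine topcase _ ?_
    have : esub X ⊥ = ⊤ := by unfold esub; simp
    rwa [this] at h
  | top =>
    induction X using EReal.rec with
    | bot =>
      have : esub (r : EReal) ⊥ = ⊤ := by unfold esub; simp
      rw [this, EReal.top_add_top]; exact le_top
    | top =>
      have hX : esub (⊤ : EReal) ⊤ = ⊤ := by unfold esub; simp
      rw [hX] at h
      refine topcase _ h
    | coe X =>
      have hX : esub (r : EReal) (X : EReal) = ((r - X : ℝ) : EReal) := by
        unfold esub; simp [EReal.coe_sub]
      rw [hX, EReal.coe_add_top]; exact le_top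
  | coe b =>
    induction X using EReal.rec with
    | bot =>
      have : esub (r : EReal) ⊥ = ⊤ := by unfold esub; simp
      rw [this, EReal.top_add_of_ne_bot (EReal.coe_ne_bot b)]; exact le_top
    | top =>
      have hX : esub (⊤ : EReal) (b : EReal) = ⊤ := by
        unfold esub; simp [EReal.top_sub_coe]
      rw [hX] at h
      refine topcase _ h
    | coe X =>
      have hX : esub (X : EReal) (b : EReal) = ((X - b : ℝ) : EReal) := by
        unfold esub; simp [EReal.coe_sub]
      have hX2 : esub (r : EReal) (X : EReal) = ((r - X : ℝ) : EReal) := by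
        unfold esub; simp [EReal.coe_sub]
      rw [hX] at h
      rw [hX2]
      induction b0 using EReal.rec with
      | bot => exact bot_le
      | top =>
        rw [EReal.coe_add_top] at h
        exact absurd h (EReal.coe_lt_top r).not_ge
      | coe b0 =>
        rw [← EReal.coe_add] at h ⊢
        have := EReal.coe_le_coe_iff.1 h
        exact EReal.coe_le_coe_iff.2 (by linarith)

lemma le_bot_of_forall_le_add (t : EReal) (s : ℝ) (h : ∀ c : ℝ, t ≤ (c : EReal) + (s : EReal)) :
    t ≤ ⊥ := by
  induction t using EReal.rec with
  | bot => exact le_rfl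
  | coe t =>
    have := h (t - s - 1)
    rw [← EReal.coe_add] at this
    have := EReal.coe_le_coe_iff.1 this
    linarith
  | top =>
    have := h 0
    rw [← EReal.coe_add] at this
    exact absurd this (EReal.coe_lt_top _).not_ge


lemma core {m n : ℕ} (B : Matrix (Fin m) (Fin n) EReal) (x : Fin n → EReal)
    (hx : ∀ mu mu' : Fin n → EReal,
      (∀ k, (⨆ j, mu j + B k j) = ⨆ j, mu' j + B k j) →
      (⨆ j, mu j + x j) = ⨆ j, mu' j + x j) :
    ∃ lam : Fin m → EReal, ∀ j, x j = ⨆ k, lam k + B k j := by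
  rcases Nat.eq_zero_or_pos n with hn | hn
  · subst hn; exact ⟨fun _ => ⊥, fun j => j.elim0⟩
  have hne : Nonempty (Fin n) := ⟨⟨0, hn⟩⟩
  set lam : Fin m → EReal := fun k => ⨅ j, esub (x j) (B k j) with hlam
  refine ⟨lam, fun j0 => ?_⟩
  have step : ∀ mu : Fin n → EReal, (∀ k, B k j0 ≤ ⨆ j, mu j + B k j) →
      x j0 ≤ ⨆ j, mu j + x j := by
    intro mu hB
    have hEq : ∀ k, (⨆ j, (mu j ⊔ (if j = j0 then (0 : EReal) else ⊥)) + B k j)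
        = ⨆ j, mu j + B k j := by
      intro k
      apply le_antisymm
      · refine iSup_le fun j => ?_
        rw [sup_add]
        refine sup_le (le_iSup (fun j => mu j + B k j) j) ?_
        by_cases h : j = j0
        · subst h; simpa using hB k
        · simp [h]
      · exact iSup_mono fun j => add_le_add_left le_sup_left _
    have hconc := hx _ _ hEq
    calc x j0 = (if j0 = j0 then (0 : EReal) else ⊥) + x j0 := by simp
    _ ≤ (mu j0 ⊔ (if j0 = j0 then (0 : EReal) else ⊥)) + x j0 :=
        add_le_add_left le_sup_right _
    _ ≤ ⨆ j, (mu j ⊔ (if j = j0 then (0 : EReal) else ⊥)) + x j :=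
        le_iSup (fun j => (mu j ⊔ (if j = j0 then (0 : EReal) else ⊥)) + x j) j0
    _ = ⨆ j, mu j + x j := hconc
  have hge : (⨆ k, lam k + B k j0) ≤ x j0 := by
    refine iSup_le fun k => ?_
    calc lam k + B k j0 ≤ esub (x j0) (B k j0) + B k j0 :=
        add_le_add_left (iInf_le _ j0) _
    _ ≤ x j0 := esub_add_le _ _
  refine le_antisymm ?_ hge
  have hmin : ∀ k, ∃ j', esub (x j') (B k j') = lam k := by
    intro k
    obtain ⟨j', hj'⟩ := Finite.exists_min (fun j => esub (x j) (B k j))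
    exact ⟨j', le_antisymm (le_iInf hj') (iInf_le (fun j => esub (x j) (B k j)) j')⟩
  rcases eq_or_ne (⨆ k, lam k + B k j0) ⊤ with ht | ht
  · rw [ht]; exact le_top
  rcases eq_or_ne (⨆ k, lam k + B k j0) ⊥ with hb | hb
  · -- bottom case
    have hbot : ∀ k, lam k + B k j0 = ⊥ := by
      intro k
      have h1 : lam k + B k j0 ≤ ⊥ := hb ▸ le_iSup (fun k => lam k + B k j0) k
      exact le_bot_iff.1 h1
    have hXlt : (⨆ j, (if x j = ⊥ ∨ x j = ⊤ then (⊥ : EReal) else x j)) < ⊤ := by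
      obtain ⟨j1, hj1⟩ :=
        Finite.exists_max (fun j => (if x j = ⊥ ∨ x j = ⊤ then (⊥ : EReal) else x j))
      refine lt_of_le_of_lt (iSup_le hj1) ?_
      by_cases h : x j1 = ⊥ ∨ x j1 = ⊤
      · simp [h]
      · simp only [if_neg h]
        exact lt_top_iff_ne_top.2 fun ht' => h (Or.inr ht')
    set X := ⨆ j, (if x j = ⊥ ∨ x j = ⊤ then (⊥ : EReal) else x j) with hXdef
    have key : ∀ c : ℝ, x j0 ≤ (c : EReal) + X := by
      intro c
      set mu : Fin n → EReal :=
        fun j => if x j = ⊥ then ⊤ else if x j = ⊤ then ⊥ else (c : EReal) with hmu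
      refine le_trans (step mu ?_) ?_
      · intro k
        rcases eq_or_ne (B k j0) ⊥ with hbk | hbk
        · rw [hbk]; exact bot_le
        have hlamk : lam k = ⊥ := by
          rcases EReal.add_eq_bot_iff.1 (hbot k) with h | h
          · exact h
          · exact absurd h hbk
        obtain ⟨j', hj'⟩ := hmin k
        have hj'b : esub (x j') (B k j') = ⊥ := by rw [hj', hlamk]
        have htop : mu j' + B k j' = ⊤ := by
          rcases esub_eq_bot hj'b with ⟨hx', hb'⟩ | ⟨hb', hx'⟩
          · rw [hmu]; simp only [hx', if_pos rfl]
            exact EReal.top_add_of_ne_bot hb'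
          · by_cases hxb : x j' = ⊥
            · rw [hmu]; simp only [hxb, if_pos rfl, hb']
              exact EReal.top_add_top
            · rw [hmu]; simp only [hxb, if_neg, hx', hb', if_false]
              exact EReal.coe_add_top c
        calc B k j0 ≤ ⊤ := le_top
        _ = mu j' + B k j' := htop.symm
        _ ≤ ⨆ j, mu j + B k j := le_iSup (fun j => mu j + B k j) j'
      · refine iSup_le fun j => ?_
        by_cases h1 : x j = ⊥
        · rw [hmu]; simp [h1]
        by_cases h2 : x j = ⊤
        · rw [hmu]; simp [h1, h2]
        · rw [hmu]; simp only [h1, h2, if_false]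
          refine add_le_add_right ?_ _
          have hle := le_iSup (fun j => (if x j = ⊥ ∨ x j = ⊤ then (⊥ : EReal) else x j)) j
          rw [← hXdef] at hle
          simpa [h1, h2] using hle
    rw [hb]
    rcases eq_or_ne X ⊥ with hXb | hXb
    · have := key 0
      rwa [hXb, EReal.add_bot] at this
    obtain ⟨s, hs⟩ : ∃ s : ℝ, X = (s : EReal) :=
      ⟨X.toReal, (EReal.coe_toReal hXlt.ne hXb).symm⟩
    exact le_bot_of_forall_le_add (x j0) s fun c => hs ▸ key c
  · -- real case
    obtain ⟨r, hr⟩ : ∃ r : ℝ, (⨆ k, lam k + B k j0) = (r : EReal) :=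
      ⟨(⨆ k, lam k + B k j0).toReal, (EReal.coe_toReal ht hb).symm⟩
    refine le_trans (step (fun j => esub (r : EReal) (x j)) ?_) ?_
    · intro k
      rcases eq_or_ne (B k j0) ⊥ with hbk | hbk
      · rw [hbk]; exact bot_le
      obtain ⟨j', hj'⟩ := hmin k
      have h1 : esub (x j') (B k j') + B k j0 ≤ (r : EReal) := by
        rw [hj']
        calc lam k + B k j0 ≤ ⨆ k, lam k + B k j0 := le_iSup (fun k => lam k + B k j0) k
        _ = (r : EReal) := hr
      have h2 := esub_arith r (x j') (B k j') (B k j0) h1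
      exact le_trans h2 (le_iSup (fun j => esub (r : EReal) (x j) + B k j) j')
    · rw [hr]
      exact iSup_le fun j => esub_add_le _ _

end StmtAux



open StmtAux in
/-- `R(A) ⊆ R(B)` iff there is a linear morphism `C(B) → C(A)` taking the
columns of `B` to the corresponding columns of `A`. -/
theorem stmt_12 (m n : ℕ) (A B : Matrix (Fin m) (Fin n) EReal) :
    rowSpace A ⊆ rowSpace B ↔
    ∃ f : (Fin m → EReal) → (Fin m → EReal),
      (∀ j, f (fun i => B i j) = fun i => A i j) ∧
      (∀ u ∈ colSpace B, f u ∈ colSpace A) ∧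
      (∀ u ∈ colSpace B, ∀ v ∈ colSpace B, f (u ⊔ v) = f u ⊔ f v) ∧
      (∀ u ∈ colSpace B, ∀ c : EReal, f (fun i => c + u i) = fun i => c + f u i) := by
  constructor
  · -- forward: containment gives the matrix C with A = C ⊙ B, define f by C
    intro hsub
    have hrow : ∀ i, ∃ lamr : Fin m → EReal, ∀ j, A i j = ⨆ k, lamr k + B k j := by
      intro i
      have hmem : (fun j => A i j) ∈ rowSpace A := by
        refine ⟨fun i' => if i' = i then 0 else ⊥, fun j => ?_⟩
        rw [iSup_delta, zero_add]
      obtain ⟨lamr, h⟩ := hsub hmem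
      exact ⟨lamr, h⟩
    choose C hC using hrow
    refine ⟨fun u i => ⨆ k, C i k + u k, ?_, ?_, ?_, ?_⟩
    · intro j; funext i; exact (hC i j).symm
    · rintro u ⟨mu, hmu⟩
      refine ⟨mu, fun i => ?_⟩
      calc (⨆ k, C i k + u k) = ⨆ k, C i k + ⨆ j, mu j + B k j :=
            iSup_congr fun k => by rw [hmu k]
      _ = ⨆ k, ⨆ j, C i k + (mu j + B k j) := iSup_congr fun k => add_iSup_fin _ _
      _ = ⨆ j, ⨆ k, C i k + (mu j + B k j) := iSup_comm
      _ = ⨆ j, ⨆ k, mu j + (C i k + B k j) :=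
            iSup_congr fun j => iSup_congr fun k => add_left_comm _ _ _
      _ = ⨆ j, mu j + ⨆ k, C i k + B k j := iSup_congr fun j => (add_iSup_fin _ _).symm
      _ = ⨆ j, mu j + A i j := iSup_congr fun j => by rw [← hC i j]
    · rintro u - v -
      funext i
      show (⨆ k, C i k + (u ⊔ v) k) = (⨆ k, C i k + u k) ⊔ (⨆ k, C i k + v k)
      calc (⨆ k, C i k + (u ⊔ v) k) = ⨆ k, (C i k + u k) ⊔ (C i k + v k) := by
            refine iSup_congr fun k => ?_
            rw [Pi.sup_apply, add_comm (C i k), sup_add, add_comm (u k), add_comm (v k)]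
      _ = (⨆ k, C i k + u k) ⊔ (⨆ k, C i k + v k) := iSup_sup_eq
    · rintro u - c
      funext i
      calc (⨆ k, C i k + (c + u k)) = ⨆ k, c + (C i k + u k) :=
            iSup_congr fun k => add_left_comm _ _ _
      _ = c + ⨆ k, C i k + u k := (add_iSup_fin _ _).symm
  · -- backward
    rintro ⟨f, h1, h2, h3, h4⟩ x ⟨lam, hlamx⟩
    have hbotB : (fun _ : Fin m => (⊥ : EReal)) ∈ colSpace B := by
      refine ⟨fun _ => ⊥, fun i => ?_⟩
      exact (le_antisymm (iSup_le fun j => by simp) bot_le).symm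
    have hfbot : f (fun _ => (⊥ : EReal)) = fun _ => (⊥ : EReal) := by
      have := h4 _ hbotB ⊥
      simpa using this
    have hcolB : ∀ j, (fun i => B i j) ∈ colSpace B := by
      intro j
      refine ⟨fun j' => if j' = j then 0 else ⊥, fun i => ?_⟩
      rw [iSup_delta, zero_add]
    have hscaled : ∀ (c : EReal) (j), (fun i => c + B i j) ∈ colSpace B := by
      intro c j
      refine ⟨fun j' => if j' = j then c else ⊥, fun i => ?_⟩
      rw [iSup_delta]
    have hsetmem : ∀ (mu : Fin n → EReal) (s : Finset (Fin n)),
        (fun i => ⨆ j ∈ s, (mu j + B i j)) ∈ colSpace B := by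
      intro mu s
      exact ⟨fun j => if j ∈ s then mu j else ⊥,
        fun i => (iSup_ite_mem s mu (fun j => B i j)).symm⟩
    have hkey : ∀ (mu : Fin n → EReal) (s : Finset (Fin n)),
        f (fun i => ⨆ j ∈ s, (mu j + B i j)) = fun i => ⨆ j ∈ s, (mu j + A i j) := by
      intro mu s
      induction s using Finset.induction_on with
      | empty => simpa using hfbot
      | @insert a s ha ih =>
        have e1 : (fun i => ⨆ j' ∈ insert a s, (mu j' + B i j'))
            = (fun i => mu a + B i a) ⊔ (fun i => ⨆ j' ∈ s, (mu j' + B i j')) := by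
          funext i
          rw [Finset.iSup_insert]
          rfl
        have e2 : f (fun i => mu a + B i a) = fun i => mu a + A i a := by
          have h := h4 (fun i => B i a) (hcolB a) (mu a)
          simp only [h1 a] at h
          exact h
        rw [e1, h3 _ (hscaled (mu a) a) _ (hsetmem mu s), e2, ih]
        funext i
        rw [Pi.sup_apply, Finset.iSup_insert]
    have hK : ∀ mu : Fin n → EReal,
        f (fun i => ⨆ j, mu j + B i j) = fun i => ⨆ j, mu j + A i j := by
      intro mu
      have := hkey mu Finset.univ
      simpa using this
    have hrowB : ∀ i, ∃ lamr : Fin m → EReal, ∀ j, A i j = ⨆ k, lamr k + B k j := by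
      intro i
      apply core B (fun j => A i j)
      intro mu mu' hEq
      have hfe : f (fun i' => ⨆ j, mu j + B i' j) = f (fun i' => ⨆ j, mu' j + B i' j) := by
        have : (fun i' => ⨆ j, mu j + B i' j) = (fun i' => ⨆ j, mu' j + B i' j) :=
          funext fun k => hEq k
        rw [this]
      have h5 := (hK mu).symm.trans (hfe.trans (hK mu'))
      simpa using congrFun h5 i
    choose D hD using hrowB
    refine ⟨fun k => ⨆ i, lam i + D i k, fun j => ?_⟩
    calc x j = ⨆ i, lam i + A i j := hlamx j
    _ = ⨆ i, lam i + ⨆ k, D i k + B k j := iSup_congr fun i => by rw [hD i j]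
    _ = ⨆ i, ⨆ k, lam i + (D i k + B k j) := iSup_congr fun i => add_iSup_fin _ _
    _ = ⨆ k, ⨆ i, lam i + (D i k + B k j) := iSup_comm
    _ = ⨆ k, ⨆ i, B k j + (lam i + D i k) :=
          iSup_congr fun k => iSup_congr fun i => by
            rw [← add_assoc, add_comm (lam i + D i k)]
    _ = ⨆ k, B k j + ⨆ i, lam i + D i k := iSup_congr fun k => (add_iSup_fin _ _).symm
    _ = ⨆ k, (⨆ i, lam i + D i k) + B k j := iSup_congr fun k => add_comm _ _
end

section
/- Let m n : ℕ and A B : Matrix (Fin m) (Fin n) EReal. Then R(A) = R(B) if and only if there exist maps f, g : (Fin m → EReal) → (Fin m → EReal) such that: f (fun i => B i j) = fun i => A i j for every j; f u ∈ C(A) for every u ∈ C(B); g v ∈ C(B) for every v ∈ C(A); g (f u) = u for all u ∈ C(B); f (g v) = v for all v ∈ C(A); f (u ⊔ v) = f u ⊔ f v for all u, v ∈ C(B); and f (fun i => c + u i) = fun i => c + f u i for all u ∈ C(B) and c : EReal (i.e. there is a linear isomorphism from C(B) onto C(A) taking the columns of B to the corresponding columns of A). -/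
namespace Stmt13Aux

/-- tropical matrix-vector product -/
noncomputable def tmul {p q : ℕ} (M : Matrix (Fin p) (Fin q) EReal) (w : Fin q → EReal) : Fin p → EReal :=
  fun i => ⨆ j, w j + M i j

lemma tmul_mem {p q : ℕ} (M : Matrix (Fin p) (Fin q) EReal) (w : Fin q → EReal) :
    tmul M w ∈ colSpace M := ⟨w, fun _ => rfl⟩

lemma add_iSup_fin {k : ℕ} (c : EReal) (h : Fin k → EReal) :
    c + ⨆ i, h i = ⨆ i, c + h i := by
  rcases Nat.eq_zero_or_pos k with hk | hk
  · subst hk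
    simp [iSup_of_empty, EReal.add_bot]
  · have : Nonempty (Fin k) := ⟨⟨0, hk⟩⟩
    obtain ⟨i0, hi0⟩ := Finite.exists_max h
    have h1 : ⨆ i, h i = h i0 := le_antisymm (iSup_le hi0) (le_iSup h i0)
    have h2 : ⨆ i, c + h i = c + h i0 :=
      le_antisymm (iSup_le fun i => add_le_add_right (hi0 i) c) (le_iSup (fun i => c + h i) i0)
    rw [h1, h2]

lemma add_sup_ereal (c a b : EReal) : c + (a ⊔ b) = (c + a) ⊔ (c + b) := by
  rcases le_total a b with h | h
  · rw [sup_eq_right.2 h, sup_eq_right.2 (add_le_add_right h c)]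
  · rw [sup_eq_left.2 h, sup_eq_left.2 (add_le_add_right h c)]

lemma sup_add_ereal (a b c : EReal) : (a ⊔ b) + c = (a + c) ⊔ (b + c) := by
  rw [add_comm, add_sup_ereal, add_comm c a, add_comm c b]

lemma swap_add_iSup {p q : ℕ} (c : Fin p → EReal) (w : Fin q → EReal)
    (M : Fin p → Fin q → EReal) :
    ⨆ i, (c i + ⨆ j, (w j + M i j)) = ⨆ j, (w j + ⨆ i, (c i + M i j)) := by
  calc ⨆ i, (c i + ⨆ j, (w j + M i j))
      = ⨆ i, ⨆ j, (c i + (w j + M i j)) := iSup_congr fun i => add_iSup_fin _ _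
    _ = ⨆ j, ⨆ i, (c i + (w j + M i j)) := iSup_comm
    _ = ⨆ j, ⨆ i, (w j + (c i + M i j)) := by
        exact iSup_congr fun j => iSup_congr fun i => add_left_comm _ _ _
    _ = ⨆ j, (w j + ⨆ i, (c i + M i j)) := iSup_congr fun j => (add_iSup_fin _ _).symm

lemma iSup_delta_c {k : ℕ} (i0 : Fin k) (c : EReal) (h : Fin k → EReal) :
    ⨆ i, (if i = i0 then c else ⊥) + h i = c + h i0 := by
  apply le_antisymm
  · refine iSup_le fun i => ?_
    by_cases hi : i = i0
    · subst hi; simp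
    · simp [hi, EReal.bot_add]
  · have := le_iSup (fun i => (if i = i0 then c else ⊥) + h i) i0
    simpa using this

lemma iSup_delta0 {k : ℕ} (i0 : Fin k) (h : Fin k → EReal) :
    ⨆ i, (if i = i0 then (0 : EReal) else ⊥) + h i = h i0 := by
  rw [iSup_delta_c]; exact zero_add _

lemma row_mem_rowSpace {p q : ℕ} (M : Matrix (Fin p) (Fin q) EReal) (l : Fin p) :
    (fun k => M l k) ∈ rowSpace M :=
  ⟨fun i => if i = l then 0 else ⊥, fun k => (iSup_delta0 l fun i => M i k).symm⟩

lemma col_mem_colSpace {p q : ℕ} (M : Matrix (Fin p) (Fin q) EReal) (j0 : Fin q) :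
    (fun i => M i j0) ∈ colSpace M :=
  ⟨fun j => if j = j0 then 0 else ⊥, fun i => (iSup_delta0 j0 fun j => M i j).symm⟩

lemma iSup_ite_mem {k : ℕ} (S : Finset (Fin k)) (w h : Fin k → EReal) :
    ⨆ j, (if j ∈ S then w j else ⊥) + h j = ⨆ j ∈ S, (w j + h j) := by
  apply le_antisymm
  · refine iSup_le fun j => ?_
    by_cases hj : j ∈ S
    · simp only [hj, if_pos]
      exact le_iSup₂ (f := fun j _ => w j + h j) j hj
    · simp [hj, EReal.bot_add]
  · refine iSup₂_le fun j hj => ?_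
    refine le_trans ?_ (le_iSup _ j)
    simp [hj]

lemma psum_mem {p q : ℕ} (M : Matrix (Fin p) (Fin q) EReal) (w : Fin q → EReal)
    (S : Finset (Fin q)) :
    (fun i => ⨆ j ∈ S, (w j + M i j)) ∈ colSpace M :=
  ⟨fun j => if j ∈ S then w j else ⊥, fun i => (iSup_ite_mem S w fun j => M i j).symm⟩

/-- extended "subtraction": the largest `y` with `b + y ≤ u`. -/
noncomputable def esub (u b : EReal) : EReal :=
  if b = ⊥ then ⊤ else if u = ⊤ then ⊤ else if b = ⊤ then ⊥ else if u = ⊥ then ⊥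
  else ((u.toReal - b.toReal : ℝ) : EReal)

lemma esub_counit (u b : EReal) : b + esub u b ≤ u := by
  unfold esub
  split_ifs with h1 h2 h3 h4
  · subst h1; simp [EReal.bot_add]
  · subst h2; exact le_top
  · subst h3; simp [EReal.add_bot]
  · subst h4; simp [EReal.add_bot]
  · have hb := EReal.coe_toReal h3 h1
    have hu := EReal.coe_toReal h2 h4
    have heq : b + ((u.toReal - b.toReal : ℝ) : EReal) = u := by
      calc b + ((u.toReal - b.toReal : ℝ) : EReal)
          = ((b.toReal : ℝ) : EReal) + ((u.toReal - b.toReal : ℝ) : EReal) := by rw [hb]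
        _ = ((b.toReal + (u.toReal - b.toReal) : ℝ) : EReal) := by norm_cast
        _ = ((u.toReal : ℝ) : EReal) := by
              rw [show b.toReal + (u.toReal - b.toReal) = u.toReal by ring]
        _ = u := hu
    exact le_of_eq heq

lemma esub_ne_top {u b : EReal} (h : esub u b ≠ ⊤) : b ≠ ⊥ ∧ u ≠ ⊤ := by
  unfold esub at h
  split_ifs at h with h1 h2 h3 h4
  · exact absurd rfl h
  · exact absurd rfl h
  · exact ⟨h1, h2⟩
  · exact ⟨h1, h2⟩
  · exact ⟨h1, h2⟩

lemma esub_bot_right (u : EReal) : esub u ⊥ = ⊤ := by simp [esub]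

lemma esub_coe_coe (s r : ℝ) : esub (s : EReal) (r : EReal) = ((s - r : ℝ) : EReal) := by
  simp [esub, EReal.coe_ne_bot, EReal.coe_ne_top, EReal.toReal_coe]

lemma esub_coe_top (r : ℝ) : esub (r : EReal) ⊤ = ⊥ := by
  simp [esub, EReal.coe_ne_top]

/-- Exactness of the completed tropical semiring: any vector compatible with the
column congruence of `M` lies in the row space of `M`. -/
lemma exactness {p q : ℕ} (M : Matrix (Fin p) (Fin q) EReal) (x : Fin q → EReal)
    (hcomp : ∀ w w' : Fin q → EReal, tmul M w ≤ tmul M w' →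
      (⨆ j, w j + x j) ≤ ⨆ j, w' j + x j) :
    x ∈ rowSpace M := by
  set lam : Fin p → EReal := fun i => ⨅ j, esub (x j) (M i j) with hlamdef
  refine ⟨lam, fun j => ?_⟩
  have hge : (⨆ i, lam i + M i j) ≤ x j := by
    refine iSup_le fun i => ?_
    have h1 : lam i ≤ esub (x j) (M i j) := iInf_le _ j
    calc lam i + M i j ≤ esub (x j) (M i j) + M i j := add_le_add_left h1 _
      _ = M i j + esub (x j) (M i j) := add_comm _ _
      _ ≤ x j := esub_counit _ _
  have hle : x j ≤ ⨆ i, lam i + M i j := by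
    by_contra hcon
    push_neg at hcon
    obtain ⟨s, hs1, hs2⟩ := EReal.exists_between_coe_real hcon
    have hnemq : Nonempty (Fin q) := ⟨j⟩
    have hw : tmul M (fun j' => if j' = j then (0 : EReal) else ⊥)
        ≤ tmul M (fun j' => esub (s : EReal) (x j')) := by
      intro i
      have hL : tmul M (fun j' => if j' = j then (0 : EReal) else ⊥) i = M i j :=
        iSup_delta0 j fun j' => M i j'
      rw [hL]
      show M i j ≤ ⨆ j', esub (s : EReal) (x j') + M i j'
      by_cases hbot : M i j = ⊥
      · rw [hbot]; exact bot_le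
      have hti : lam i + M i j ≤ ⨆ i', lam i' + M i' j :=
        le_iSup (fun i' => lam i' + M i' j) i
      have hts : lam i + M i j < (s : EReal) := lt_of_le_of_lt hti hs1
      have hlamtop : lam i ≠ ⊤ := by
        intro hh
        rw [hh, EReal.top_add_of_ne_bot hbot] at hts
        exact absurd hts (by simp)
      obtain ⟨jm, hjm⟩ := Finite.exists_min fun j' => esub (x j') (M i j')
      have hlami : lam i = esub (x jm) (M i jm) :=
        le_antisymm (iInf_le _ _) (le_iInf hjm)
      have hnt : esub (x jm) (M i jm) ≠ ⊤ := by rw [← hlami]; exact hlamtop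
      obtain ⟨hb, hx⟩ := esub_ne_top hnt
      refine le_trans ?_ (le_iSup (fun j' => esub (s : EReal) (x j') + M i j') jm)
      rcases eq_or_ne (x jm) ⊥ with hxb | hxb
      · rw [hxb, esub_bot_right, EReal.top_add_of_ne_bot hb]
        exact le_top
      · obtain ⟨xr, hxreq⟩ : ∃ r : ℝ, x jm = (r : EReal) :=
          ⟨(x jm).toReal, (EReal.coe_toReal hx hxb).symm⟩
        rcases eq_or_ne (M i jm) ⊤ with hMt | hMt
        · rw [hMt, hxreq, esub_coe_coe, EReal.add_top_of_ne_bot (EReal.coe_ne_bot _)]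
          exact le_top
        · obtain ⟨br, hbreq⟩ : ∃ r : ℝ, M i jm = (r : EReal) :=
            ⟨(M i jm).toReal, (EReal.coe_toReal hMt hb).symm⟩
          have hlamval : lam i = ((xr - br : ℝ) : EReal) := by
            rw [hlami, hxreq, hbreq, esub_coe_coe]
          have hMijt : M i j ≠ ⊤ := by
            intro hh
            rw [hh, EReal.add_top_of_ne_bot (by rw [hlamval]; exact EReal.coe_ne_bot _)] at hts
            exact absurd hts (by simp)
          obtain ⟨dr, hdreq⟩ : ∃ r : ℝ, M i j = (r : EReal) :=
            ⟨(M i j).toReal, (EReal.coe_toReal hMijt hbot).symm⟩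
          rw [hlamval, hdreq] at hts
          have hreal : xr - br + dr < s := by exact_mod_cast hts
          rw [hxreq, hbreq, hdreq, esub_coe_coe]
          have hfin : dr ≤ s - xr + br := by linarith
          exact_mod_cast hfin
    have hpair := hcomp _ _ hw
    rw [iSup_delta0 j x] at hpair
    have hR : (⨆ j', esub (s : EReal) (x j') + x j') ≤ (s : EReal) := by
      refine iSup_le fun j' => ?_
      rw [add_comm]; exact esub_counit _ _
    exact absurd hs2 (not_lt.2 (le_trans hpair hR))
  exact le_antisymm hle hge

end Stmt13Aux

open Stmt13Aux in
/-- `R(A) = R(B)` iff there is a linear isomorphism from `C(B)` onto `C(A)`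
taking the columns of `B` to the corresponding columns of `A`. -/
theorem stmt_13 (m n : ℕ) (A B : Matrix (Fin m) (Fin n) EReal) :
    rowSpace A = rowSpace B ↔
    ∃ f g : (Fin m → EReal) → (Fin m → EReal),
      (∀ j, f (fun i => B i j) = fun i => A i j) ∧
      (∀ u ∈ colSpace B, f u ∈ colSpace A) ∧
      (∀ v ∈ colSpace A, g v ∈ colSpace B) ∧
      (∀ u ∈ colSpace B, g (f u) = u) ∧
      (∀ v ∈ colSpace A, f (g v) = v) ∧
      (∀ u ∈ colSpace B, ∀ v ∈ colSpace B, f (u ⊔ v) = f u ⊔ f v) ∧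
      (∀ u ∈ colSpace B, ∀ c : EReal, f (fun i => c + u i) = fun i => c + f u i) := by
  constructor
  · -- forward direction
    intro hAB
    have hA : ∀ l, ∃ c : Fin m → EReal, ∀ k, A l k = ⨆ i, c i + B i k := by
      intro l
      have h1 : (fun k => A l k) ∈ rowSpace B := hAB ▸ row_mem_rowSpace A l
      obtain ⟨c, hc⟩ := h1
      exact ⟨c, fun k => hc k⟩
    have hB : ∀ l, ∃ c : Fin m → EReal, ∀ k, B l k = ⨆ i, c i + A i k := by
      intro l
      have h1 : (fun k => B l k) ∈ rowSpace A := hAB ▸ row_mem_rowSpace B l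
      obtain ⟨c, hc⟩ := h1
      exact ⟨c, fun k => hc k⟩
    choose cA hcA using hA
    choose cB hcB using hB
    refine ⟨fun u l => ⨆ i, cA l i + u i, fun v i => ⨆ l, cB i l + v l,
      ?_, ?_, ?_, ?_, ?_, ?_, ?_⟩
    case _ => -- columns
      intro j
      funext l
      exact (hcA l j).symm
    case _ => -- f maps C(B) to C(A)
      rintro u ⟨w, hw⟩
      have hu : u = tmul B w := funext hw
      subst hu
      refine ⟨w, fun l => ?_⟩
      show (⨆ i, cA l i + ⨆ j, (w j + B i j)) = ⨆ j, w j + A l j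
      rw [swap_add_iSup (cA l) w fun i j => B i j]
      exact iSup_congr fun j => by rw [← hcA l j]
    case _ => -- g maps C(A) to C(B)
      rintro v ⟨w, hw⟩
      have hv : v = tmul A w := funext hw
      subst hv
      refine ⟨w, fun i => ?_⟩
      show (⨆ l, cB i l + ⨆ j, (w j + A l j)) = ⨆ j, w j + B i j
      rw [swap_add_iSup (cB i) w fun l j => A l j]
      exact iSup_congr fun j => by rw [← hcB i j]
    case _ => -- g ∘ f = id on C(B)
      rintro u ⟨w, hw⟩
      have hu : u = tmul B w := funext hw
      subst hu
      have h1 : (fun l => ⨆ i, cA l i + tmul B w i) = tmul A w := by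
        funext l
        show (⨆ i, cA l i + ⨆ j, (w j + B i j)) = ⨆ j, w j + A l j
        rw [swap_add_iSup (cA l) w fun i j => B i j]
        exact iSup_congr fun j => by rw [← hcA l j]
      funext i
      show (⨆ l, cB i l + ⨆ i', (cA l i' + tmul B w i')) = tmul B w i
      have h1' : ∀ l, (⨆ i', cA l i' + tmul B w i') = tmul A w l := fun l => congrFun h1 l
      simp only [h1']
      show (⨆ l, cB i l + ⨆ j, (w j + A l j)) = ⨆ j, w j + B i j
      rw [swap_add_iSup (cB i) w fun l j => A l j]
      exact iSup_congr fun j => by rw [← hcB i j]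
    case _ => -- f ∘ g = id on C(A)
      rintro v ⟨w, hw⟩
      have hv : v = tmul A w := funext hw
      subst hv
      have h1 : (fun i => ⨆ l, cB i l + tmul A w l) = tmul B w := by
        funext i
        show (⨆ l, cB i l + ⨆ j, (w j + A l j)) = ⨆ j, w j + B i j
        rw [swap_add_iSup (cB i) w fun l j => A l j]
        exact iSup_congr fun j => by rw [← hcB i j]
      funext l
      show (⨆ i, cA l i + ⨆ l', (cB i l' + tmul A w l')) = tmul A w l
      have h1' : ∀ i, (⨆ l', cB i l' + tmul A w l') = tmul B w i := fun i => congrFun h1 i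
      simp only [h1']
      show (⨆ i, cA l i + ⨆ j, (w j + B i j)) = ⨆ j, w j + A l j
      rw [swap_add_iSup (cA l) w fun i j => B i j]
      exact iSup_congr fun j => by rw [← hcA l j]
    case _ => -- f preserves sups
      intro u _ v _
      funext l
      show (⨆ i, cA l i + (u i ⊔ v i)) = (⨆ i, cA l i + u i) ⊔ (⨆ i, cA l i + v i)
      simp_rw [add_sup_ereal]
      exact iSup_sup_eq
    case _ => -- f preserves scalars
      intro u _ c
      funext l
      show (⨆ i, cA l i + (c + u i)) = c + ⨆ i, cA l i + u i
      rw [add_iSup_fin]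
      exact iSup_congr fun i => (add_left_comm _ _ _).symm
  · -- backward direction
    rintro ⟨f, g, hcol, _hfC, _hgC, hgf, _hfg, hsup, hscal⟩
    have hbotmem : (fun _ : Fin m => (⊥ : EReal)) ∈ colSpace B :=
      ⟨fun _ => ⊥, fun i => by simp [EReal.bot_add]⟩
    have hfbot : f (fun _ => (⊥ : EReal)) = fun _ => (⊥ : EReal) := by
      have h := hscal _ hbotmem ⊥
      simpa [EReal.bot_add] using h
    have hfpsum : ∀ (w : Fin n → EReal) (S : Finset (Fin n)),
        f (fun i => ⨆ j ∈ S, (w j + B i j)) = fun i => ⨆ j ∈ S, (w j + A i j) := by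
      intro w S
      induction S using Finset.induction_on with
      | empty => simpa using hfbot
      | @insert a S ha ih =>
        have hsplitB : (fun i => ⨆ j ∈ insert a S, (w j + B i j))
            = (fun i => w a + B i a) ⊔ (fun i => ⨆ j ∈ S, (w j + B i j)) := by
          funext i
          rw [Finset.iSup_insert]
          rfl
        have hcolB : (fun i => w a + B i a) ∈ colSpace B :=
          ⟨fun j => if j = a then w a else ⊥, fun i => (iSup_delta_c a (w a) fun j => B i j).symm⟩
        have hmemS : (fun i => ⨆ j ∈ S, (w j + B i j)) ∈ colSpace B := psum_mem B w S
        rw [hsplitB, hsup _ hcolB _ hmemS]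
        have hcola : f (fun i => w a + B i a) = fun i => w a + A i a := by
          have h1 := hscal _ (col_mem_colSpace B a) (w a)
          rw [hcol a] at h1
          exact h1
        rw [hcola, ih]
        funext i
        rw [Pi.sup_apply, Finset.iSup_insert]
    have hkeyf : ∀ w, f (tmul B w) = tmul A w := by
      intro w
      have h := hfpsum w Finset.univ
      have e1 : (fun i => ⨆ j ∈ Finset.univ, (w j + B i j)) = tmul B w := by
        funext i; simp [tmul]
      have e2 : (fun i => ⨆ j ∈ Finset.univ, (w j + A i j)) = tmul A w := by
        funext i; simp [tmul]
      rw [e1, e2] at h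
      exact h
    have hkeyg : ∀ w, g (tmul A w) = tmul B w := by
      intro w
      rw [← hkeyf w]
      exact hgf _ (tmul_mem B w)
    have tmul_sup : ∀ (M : Matrix (Fin m) (Fin n) EReal) (w w' : Fin n → EReal),
        tmul M (w ⊔ w') = tmul M w ⊔ tmul M w' := by
      intro M w w'
      funext i
      rw [Pi.sup_apply]
      show (⨆ j, (w j ⊔ w' j) + M i j) = (⨆ j, w j + M i j) ⊔ ⨆ j, w' j + M i j
      simp_rw [sup_add_ereal]
      exact iSup_sup_eq
    have tmul_mono : ∀ (M : Matrix (Fin m) (Fin n) EReal) (w w' : Fin n → EReal),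
        w ≤ w' → tmul M w ≤ tmul M w' := by
      intro M w w' h i
      exact iSup_mono fun j => add_le_add_left (h j) _
    have hcongAB : ∀ w w', tmul B w ≤ tmul B w' → tmul A w ≤ tmul A w' := by
      intro w w' h
      have h1 : tmul B (w ⊔ w') = tmul B w' := by
        rw [tmul_sup]; exact sup_eq_right.2 h
      have h2 : tmul A (w ⊔ w') = tmul A w' := by
        rw [← hkeyf, h1, hkeyf]
      rw [← h2]
      exact tmul_mono A w (w ⊔ w') le_sup_left
    have hcongBA : ∀ w w', tmul A w ≤ tmul A w' → tmul B w ≤ tmul B w' := by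
      intro w w' h
      have h1 : tmul A (w ⊔ w') = tmul A w' := by
        rw [tmul_sup]; exact sup_eq_right.2 h
      have h2 : tmul B (w ⊔ w') = tmul B w' := by
        rw [← hkeyg, h1, hkeyg]
      rw [← h2]
      exact tmul_mono B w (w ⊔ w') le_sup_left
    have incl : ∀ M N : Matrix (Fin m) (Fin n) EReal,
        (∀ w w', tmul N w ≤ tmul N w' → tmul M w ≤ tmul M w') →
        rowSpace M ⊆ rowSpace N := by
      intro M N hc x hx
      obtain ⟨lam, hl⟩ := hx
      refine exactness N x (fun w w' h => ?_)
      have hM := hc w w' h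
      have hpair : ∀ v : Fin n → EReal, (⨆ j, v j + x j) = ⨆ i, lam i + tmul M v i := by
        intro v
        calc ⨆ j, v j + x j = ⨆ j, (v j + ⨆ i, (lam i + M i j)) :=
              iSup_congr fun j => by rw [hl j]
          _ = ⨆ i, (lam i + ⨆ j, (v j + M i j)) := (swap_add_iSup lam v fun i j => M i j).symm
          _ = ⨆ i, lam i + tmul M v i := rfl
      rw [hpair w, hpair w']
      exact iSup_mono fun i => add_le_add_right (hM i) _
    exact Set.Subset.antisymm (incl A B hcongAB) (incl B A hcongBA)
end

section
/- Let n k : ℕ, let a : Fin n → EReal and r : Fin k → (Fin n → EReal), and suppose a lies in the convex hull of r₁, ..., r_k, i.e. there exists lam : Fin k → EReal with a j = ⨆ i, lam i + r i j for all j. Then a j = ⨆ i, ⟨r i | a⟩ + r i j for all j. -/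
private lemma sSup_add_le_of_forall {S : Set EReal} {x y : EReal}
    (h : ∀ c ∈ S, c + x ≤ y) : sSup S + x ≤ y := by
  rcases eq_or_ne x ⊥ with rfl | hxb
  · simp
  rcases eq_or_ne x ⊤ with rfl | hxt
  · rcases eq_or_ne y ⊤ with rfl | hyt
    · exact le_top
    · have hS : ∀ c ∈ S, c = ⊥ := by
        intro c hc
        by_contra hcb
        have : c + (⊤ : EReal) = ⊤ := EReal.add_top_of_ne_bot hcb
        exact hyt (top_le_iff.mp (this ▸ h c hc))
      have : sSup S ≤ ⊥ := sSup_le fun c hc => (hS c hc).le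
      rw [le_bot_iff.mp this]
      simp
  · apply EReal.add_le_of_le_sub
    apply sSup_le
    intro c hc
    exact (EReal.le_sub_iff_add_le (Or.inl hxb) (Or.inl hxt)).mpr (h c hc)

private lemma bracket_add_le {n : ℕ} (x y : Fin n → EReal) (i : Fin n) :
    bracket x y + x i ≤ y i :=
  sSup_add_le_of_forall fun _ hc => hc i

/-- If `a` lies in the convex hull of `r 1, ..., r k`, then
`a = ⨆ i, ⟨r i | a⟩ + r i`. -/
theorem stmt_16 (n k : ℕ) (a : Fin n → EReal) (r : Fin k → (Fin n → EReal))
    (h : ∃ lam : Fin k → EReal, ∀ j, a j = ⨆ i, lam i + r i j) :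
    ∀ j, a j = ⨆ i, bracket (r i) a + r i j := by
  obtain ⟨lam, hlam⟩ := h
  intro j
  apply le_antisymm
  · rw [hlam j]
    apply iSup_mono
    intro i
    apply add_le_add_left
    apply le_sSup
    intro j'
    rw [hlam j']
    exact le_iSup (fun i' => lam i' + r i' j') i
  · exact iSup_le fun i => bracket_add_le (r i) a j
end

section
/- The Hilbert projective distance d_H is an extended pseudometric on Fin n → EReal: for all x, y, z : Fin n → EReal one has d_H x x = 0, d_H x y = d_H y x, 0 ≤ d_H x y, and d_H x z ≤ d_H x y + d_H y z. -/
open Classical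

namespace TropAux

lemma cancel (a : EReal) (r : ℝ) : a + (r : EReal) + ((-r : ℝ) : EReal) = a := by
  rw [add_assoc, ← EReal.coe_add]
  simp

lemma le_bracket {n : ℕ} {x y : Fin n → EReal} {c : EReal}
    (h : ∀ i, c + x i ≤ y i) : c ≤ bracket x y :=
  le_sSup h

lemma mem_bracket {n : ℕ} (x y : Fin n → EReal) (i : Fin n) :
    bracket x y + x i ≤ y i := by
  set S : Set EReal := {c : EReal | ∀ i, c + x i ≤ y i} with hS
  show sSup S + x i ≤ y i
  cases hxi : x i with
  | bot => simp
  | top =>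
    by_cases hy : y i = ⊤
    · simp [hy]
    · have hsub : S ⊆ {⊥} := by
        intro c hc
        by_contra hcb
        have := hc i
        rw [hxi, EReal.add_top_of_ne_bot hcb] at this
        exact hy (top_le_iff.mp this)
      have : sSup S ≤ ⊥ := sSup_le fun c hc => le_of_eq (hsub hc)
      rw [le_bot_iff.mp this]
      simp
  | coe r =>
    have hle : sSup S ≤ y i + ((-r : ℝ) : EReal) := by
      apply sSup_le
      intro c hc
      have h1 : c + (r : EReal) ≤ y i := by rw [← hxi]; exact hc i
      calc c = c + (r : EReal) + ((-r : ℝ) : EReal) := (cancel c r).symm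
        _ ≤ y i + ((-r : ℝ) : EReal) := add_le_add_left h1 _
    calc sSup S + (r : EReal) ≤ (y i + ((-r : ℝ) : EReal)) + (r : EReal) :=
          add_le_add_left hle _
      _ = y i := by rw [show ((r : ℝ) : EReal) = ((-(-r) : ℝ) : EReal) by norm_num]
                    exact cancel (y i) (-r)

lemma comp {n : ℕ} (x y z : Fin n → EReal) :
    bracket x y + bracket y z ≤ bracket x z := by
  apply le_bracket
  intro i
  calc bracket x y + bracket y z + x i = bracket y z + (bracket x y + x i) := by
        rw [add_comm (bracket x y) (bracket y z), add_assoc]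
    _ ≤ bracket y z + y i := add_le_add_right (mem_bracket x y i) _
    _ ≤ z i := mem_bracket y z i

lemma nonpos {n : ℕ} {x y : Fin n → EReal}
    (h : ¬∃ c : ℝ, y = fun i => (c : EReal) + x i) :
    bracket x y + bracket y x ≤ 0 := by
  by_contra h'
  have hs : 0 < bracket x y + bracket y x := lt_of_not_ge h'
  set b := bracket x y with hb
  set b' := bracket y x with hb'
  have hbne : b ≠ ⊥ := by
    intro hbb
    rw [hbb, EReal.bot_add] at hs
    exact absurd hs (by simp)
  have hb'ne : b' ≠ ⊥ := by
    intro hbb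
    rw [hbb, EReal.add_bot] at hs
    exact absurd hs (by simp)
  apply h
  refine ⟨0, funext fun i => ?_⟩
  have hxy : b + x i ≤ y i := mem_bracket x y i
  have hyx : b' + y i ≤ x i := mem_bracket y x i
  have key : x i = y i := by
    cases hxi : x i with
    | bot =>
      rw [hxi, le_bot_iff, EReal.add_eq_bot_iff] at hyx
      rcases hyx with h1 | h1
      · exact absurd h1 hb'ne
      · rw [h1]
    | top =>
      rw [hxi, EReal.add_top_of_ne_bot hbne, top_le_iff] at hxy
      rw [hxy]
    | coe r =>
      exfalso
      have hch : (b + b') + x i ≤ x i := by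
        calc (b + b') + x i = b' + (b + x i) := by
              rw [add_comm b b', add_assoc]
          _ ≤ b' + y i := add_le_add_right hxy _
          _ ≤ x i := hyx
      rw [hxi] at hch
      cases hsv : b + b' with
      | bot => rw [hsv] at hs; exact absurd hs (by simp)
      | top =>
        rw [hsv, EReal.top_add_coe, top_le_iff] at hch
        exact EReal.coe_ne_top r hch
      | coe t =>
        rw [hsv, ← EReal.coe_add, EReal.coe_le_coe_iff] at hch
        rw [hsv] at hs
        have : (0 : ℝ) < t := by exact_mod_cast hs
        linarith
  rw [key]
  simp

lemma rel_shift {n : ℕ} {x y : Fin n → EReal} {c : ℝ}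
    (hxy : y = fun i => (c : EReal) + x i) (z : Fin n → EReal) :
    (∃ d : ℝ, z = fun i => (d : EReal) + x i) ↔ (∃ d : ℝ, z = fun i => (d : EReal) + y i) := by
  constructor
  · rintro ⟨d, rfl⟩
    refine ⟨d - c, funext fun i => ?_⟩
    rw [hxy]
    rw [← add_assoc, ← EReal.coe_add]
    norm_num
  · rintro ⟨d, rfl⟩
    refine ⟨d + c, funext fun i => ?_⟩
    rw [hxy]
    rw [← add_assoc, ← EReal.coe_add]

lemma bracket_shift_left {n : ℕ} {x y : Fin n → EReal} {c : ℝ}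
    (hxy : y = fun i => (c : EReal) + x i) (z : Fin n → EReal) :
    bracket y z + (c : EReal) = bracket x z := by
  apply le_antisymm
  · apply le_bracket
    intro i
    calc bracket y z + (c : EReal) + x i = bracket y z + ((c : EReal) + x i) := add_assoc _ _ _
      _ = bracket y z + y i := by rw [hxy]
      _ ≤ z i := mem_bracket y z i
  · have hmem : bracket x z + ((-c : ℝ) : EReal) ≤ bracket y z := by
      apply le_bracket
      intro i
      rw [hxy]
      calc bracket x z + ((-c : ℝ) : EReal) + ((c : EReal) + x i)
          = (bracket x z + ((-c : ℝ) : EReal) + (c : EReal)) + x i := by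
            rw [add_assoc (bracket x z + ((-c : ℝ) : EReal)) _ _]
        _ = bracket x z + x i := by
            rw [show ((c : ℝ) : EReal) = ((-(-c) : ℝ) : EReal) by norm_num, cancel]
        _ ≤ z i := mem_bracket x z i
    calc bracket x z = bracket x z + ((-c : ℝ) : EReal) + (c : EReal) := by
          rw [show ((c : ℝ) : EReal) = ((-(-c) : ℝ) : EReal) by norm_num, cancel]
      _ ≤ bracket y z + (c : EReal) := add_le_add_left hmem _

lemma bracket_shift_right {n : ℕ} {x y : Fin n → EReal} {c : ℝ}
    (hxy : y = fun i => (c : EReal) + x i) (z : Fin n → EReal) :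
    bracket z y = bracket z x + (c : EReal) := by
  apply le_antisymm
  · have hmem : bracket z y + ((-c : ℝ) : EReal) ≤ bracket z x := by
      apply le_bracket
      intro i
      have h1 : bracket z y + z i ≤ (c : EReal) + x i :=
        le_of_le_of_eq (mem_bracket z y i) (congrFun hxy i)
      calc bracket z y + ((-c : ℝ) : EReal) + z i
          = ((-c : ℝ) : EReal) + (bracket z y + z i) := by
            rw [add_comm (bracket z y) _, add_assoc]
        _ ≤ ((-c : ℝ) : EReal) + ((c : EReal) + x i) := add_le_add_right h1 _
        _ = (((-c : ℝ) : EReal) + (c : EReal)) + x i := (add_assoc _ _ _).symm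
        _ = x i := by rw [← EReal.coe_add]; norm_num
    calc bracket z y = bracket z y + ((-c : ℝ) : EReal) + (c : EReal) := by
          rw [show ((c : ℝ) : EReal) = ((-(-c) : ℝ) : EReal) by norm_num, cancel]
      _ ≤ bracket z x + (c : EReal) := add_le_add_left hmem _
  · apply le_bracket
    intro i
    calc bracket z x + (c : EReal) + z i = (c : EReal) + (bracket z x + z i) := by
          rw [add_comm (bracket z x) _, add_assoc]
      _ ≤ (c : EReal) + x i := add_le_add_right (mem_bracket z x i) _
      _ = y i := by rw [hxy]

lemma dH_shift {n : ℕ} {x y : Fin n → EReal} {c : ℝ}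
    (hxy : y = fun i => (c : EReal) + x i) (z : Fin n → EReal) :
    dH x z = dH y z := by
  unfold dH
  by_cases h : ∃ d : ℝ, z = fun i => (d : EReal) + x i
  · rw [if_pos h, if_pos ((rel_shift hxy z).mp h)]
  · rw [if_neg h, if_neg (fun h' => h ((rel_shift hxy z).mpr h'))]
    congr 1
    calc bracket x z + bracket z x
        = (bracket y z + (c : EReal)) + bracket z x := by rw [bracket_shift_left hxy z]
      _ = bracket y z + ((c : EReal) + bracket z x) := add_assoc _ _ _
      _ = bracket y z + (bracket z x + (c : EReal)) := by rw [add_comm ((c : EReal)) _]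
      _ = bracket y z + bracket z y := by rw [← bracket_shift_right hxy z]

lemma rel_symm {n : ℕ} {x y : Fin n → EReal}
    (h : ∃ c : ℝ, y = fun i => (c : EReal) + x i) :
    ∃ c : ℝ, x = fun i => (c : EReal) + y i := by
  obtain ⟨c, rfl⟩ := h
  refine ⟨-c, funext fun i => ?_⟩
  show x i = ((-c : ℝ) : EReal) + ((c : EReal) + x i)
  rw [← add_assoc, ← EReal.coe_add]
  norm_num

lemma dH_symm {n : ℕ} (x y : Fin n → EReal) : dH x y = dH y x := by
  unfold dH
  by_cases h : ∃ c : ℝ, y = fun i => (c : EReal) + x i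
  · rw [if_pos h, if_pos (rel_symm h)]
  · rw [if_neg h, if_neg (fun h' => h (rel_symm h')), add_comm]

lemma dH_nonneg {n : ℕ} (x y : Fin n → EReal) : 0 ≤ dH x y := by
  unfold dH
  by_cases h : ∃ c : ℝ, y = fun i => (c : EReal) + x i
  · rw [if_pos h]
  · rw [if_neg h]
    rw [show (0 : EReal) = -0 from neg_zero.symm]
    exact EReal.neg_le_neg_iff.mpr (nonpos h)

end TropAux

open TropAux in
/-- The Hilbert projective distance is an extended pseudometric. -/
theorem stmt_19 (n : ℕ) (x y z : Fin n → EReal) :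
    dH x x = 0 ∧ dH x y = dH y x ∧ 0 ≤ dH x y ∧ dH x z ≤ dH x y + dH y z := by
  refine ⟨?_, dH_symm x y, dH_nonneg x y, ?_⟩
  · unfold dH
    rw [if_pos ⟨0, funext fun i => by simp⟩]
  · by_cases h1 : ∃ c : ℝ, y = fun i => (c : EReal) + x i
    · obtain ⟨c, hc⟩ := h1
      have : dH x y = 0 := by unfold dH; rw [if_pos ⟨c, hc⟩]
      rw [this, zero_add, dH_shift hc z]
    · by_cases h2 : ∃ c : ℝ, z = fun i => (c : EReal) + y i
      · obtain ⟨c, hc⟩ := h2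
        have hz : dH y z = 0 := by unfold dH; rw [if_pos ⟨c, hc⟩]
        rw [hz, add_zero]
        refine le_of_eq ?_
        calc dH x z = dH z x := dH_symm x z
          _ = dH y x := (dH_shift hc x).symm
          _ = dH x y := dH_symm y x
      · by_cases h3 : ∃ c : ℝ, z = fun i => (c : EReal) + x i
        · have : dH x z = 0 := by unfold dH; rw [if_pos h3]
          rw [this]
          exact add_nonneg (dH_nonneg x y) (dH_nonneg y z)
        · have hxy : dH x y = -(bracket x y + bracket y x) := by unfold dH; rw [if_neg h1]
          have hyz : dH y z = -(bracket y z + bracket z y) := by unfold dH; rw [if_neg h2]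
          have hxz : dH x z = -(bracket x z + bracket z x) := by unfold dH; rw [if_neg h3]
          set A := bracket x y + bracket y x with hA
          set B := bracket y z + bracket z y with hBB
          set C := bracket x z + bracket z x with hC
          have hA0 : A ≤ 0 := nonpos h1
          have hB0 : B ≤ 0 := nonpos h2
          have hAB : A + B ≤ C := by
            calc A + B = (bracket x y + bracket y z) + (bracket z y + bracket y x) := by
                  rw [hA, hBB]; abel
              _ ≤ bracket x z + bracket z x :=
                  add_le_add (comp x y z) (comp z y x)
          rw [hxy, hyz, hxz]
          by_cases hAbot : A = ⊥
          · rw [hAbot]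
            have : -B ≠ ⊥ := by
              intro hb
              rw [show -B = ⊥ ↔ B = ⊤ from EReal.neg_eq_bot_iff] at hb
              rw [hb] at hB0
              exact absurd hB0 (by simp)
            rw [show -(⊥ : EReal) = ⊤ from EReal.neg_bot, EReal.top_add_of_ne_bot this]
            exact le_top
          · by_cases hBbot : B = ⊥
            · rw [hBbot]
              have : -A ≠ ⊥ := by
                intro hb
                rw [show -A = ⊥ ↔ A = ⊤ from EReal.neg_eq_bot_iff] at hb
                rw [hb] at hA0
                exact absurd hA0 (by simp)
              rw [show -(⊥ : EReal) = ⊤ from EReal.neg_bot, EReal.add_top_of_ne_bot this]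
              exact le_top
            · have hAt : A ≠ ⊤ := fun h => by rw [h] at hA0; exact absurd hA0 (by simp)
              have hBt : B ≠ ⊤ := fun h => by rw [h] at hB0; exact absurd hB0 (by simp)
              have hrw : -A + -B = -(A + B) := by
                rw [EReal.neg_add (Or.inl hAbot) (Or.inl hAt), sub_eq_add_neg]
              rw [hrw]
              exact EReal.neg_le_neg_iff.mpr hAB
end
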